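/- arXiv:1501.06982 — 7 statements merged into one kernel-verified Lean document; each statement's English description precedes it below -/
import Mathlib

section
/- Let A = ⊕_{i=0}^{c} Aᵢ be a graded Artinian K-algebra with the strong Lefschetz property and A_c ≠ 0. Suppose B ⊆ A is a graded K-subalgebra with B_c = A_c, B₁ contains a strong Lefschetz element of A, and B has a symmetric Hilbert function (dim B_i = dim B_{c−i} for all i). Then B has the strong Lefschetz property. -/
/-! Multiplication by `l ^ (c - 2i)` sends `Bᵢ` into `B_{c-i}` and is injective there, being
injective on all of `Aᵢ`. The symmetric Hilbert function of `B` makes source and target equally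
dimensional, so this injection is a bijection. -/

open Module

theorem LinearMap.bijOn_of_injOn_of_finrank_eq {K V W : Type*} [Field K]
    [AddCommGroup V] [Module K V] [AddCommGroup W] [Module K W]
    {p : Submodule K V} {q : Submodule K W} [FiniteDimensional K p] [FiniteDimensional K q]
    {f : V →ₗ[K] W} (hmaps : Set.MapsTo f p q) (hinj : Set.InjOn f p)
    (hrank : finrank K p = finrank K q) : Set.BijOn f p q := by
  refine ⟨hmaps, hinj, ?_⟩
  rw [← hmaps.restrict_surjective_iff]
  exact (injective_iff_surjective_of_finrank_eq_finrank hrank (f := f.restrict hmaps)).mp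
    (hmaps.restrict_inj.mpr hinj)

theorem SetLike.mapsTo_pow_mul_inf_subalgebra {K A : Type*} [CommSemiring K] [Semiring A]
    [Algebra K A] {𝒜 : ℕ → Submodule K A} [SetLike.GradedMonoid 𝒜] {B : Subalgebra K A}
    {l : A} (hl1 : l ∈ 𝒜 1) (hlB : l ∈ B) (n i : ℕ) :
    Set.MapsTo (fun a => l ^ n * a) (𝒜 i ⊓ Subalgebra.toSubmodule B : Submodule K A)
      (𝒜 (n + i) ⊓ Subalgebra.toSubmodule B : Submodule K A) := by
  rintro a ⟨ha𝒜, haB⟩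
  refine ⟨SetLike.mul_mem_graded ?_ ha𝒜, B.mul_mem (B.pow_mem hlB n) haB⟩
  simpa using SetLike.pow_mem_graded n hl1

theorem subring_theorem_general
    (K A : Type*) [Field K] [CommRing A] [Algebra K A] [FiniteDimensional K A]
    (𝒜 : ℕ → Submodule K A) [GradedAlgebra 𝒜]
    (c : ℕ)
    (B : Subalgebra K A)
    -- `B₁` contains a strong Lefschetz element of `A`
    (l : A) (hl1 : l ∈ 𝒜 1) (hlB : l ∈ B)
    (hSLA : ∀ i ≤ c / 2,
      Set.BijOn (fun a => l ^ (c - 2 * i) * a) (𝒜 i) (𝒜 (c - i)))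
    -- `B` has a symmetric Hilbert function
    (hsym : ∀ i ≤ c,
      Module.finrank K (𝒜 i ⊓ Subalgebra.toSubmodule B : Submodule K A)
        = Module.finrank K (𝒜 (c - i) ⊓ Subalgebra.toSubmodule B : Submodule K A)) :
    -- `B` has the strong Lefschetz property
    ∃ m ∈ 𝒜 1 ⊓ Subalgebra.toSubmodule B, ∀ i ≤ c / 2,
      Set.BijOn (fun a => m ^ (c - 2 * i) * a)
        (𝒜 i ⊓ Subalgebra.toSubmodule B : Submodule K A)
        (𝒜 (c - i) ⊓ Subalgebra.toSubmodule B : Submodule K A) := by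
  refine ⟨l, ⟨hl1, hlB⟩, fun i hi => ?_⟩
  have hdeg : c - 2 * i + i = c - i := by omega
  have hmaps := SetLike.mapsTo_pow_mul_inf_subalgebra hl1 hlB (c - 2 * i) i
  rw [hdeg] at hmaps
  exact LinearMap.bijOn_of_injOn_of_finrank_eq (f := LinearMap.mulLeft K (l ^ (c - 2 * i)))
    hmaps ((hSLA i hi).injOn.mono inf_le_left) (hsym i (by omega))

/-- Proposition 2.5 (Subring Theorem): if `A` is a graded Artinian `K`-algebra
with the strong Lefschetz property, `A_c ≠ 0` is the top degree, and `B` is a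
graded subalgebra with `B_c = A_c` whose degree one part contains a strong
Lefschetz element of `A`, and `B` has a symmetric Hilbert function, then `B`
has the strong Lefschetz property. -/
theorem subring_theorem
    (K A : Type*) [Field K] [CommRing A] [Algebra K A] [FiniteDimensional K A]
    (𝒜 : ℕ → Submodule K A) [GradedAlgebra 𝒜]
    (c : ℕ) (htop : ∀ i, c < i → 𝒜 i = ⊥) (hc : 𝒜 c ≠ ⊥)
    (B : Subalgebra K A)
    -- `B` is a graded subalgebra: it is spanned by its homogeneous parts
    (hBgr : Subalgebra.toSubmodule B = ⨆ i, (𝒜 i ⊓ Subalgebra.toSubmodule B))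
    -- `B_c = A_c`
    (hBc : 𝒜 c ≤ Subalgebra.toSubmodule B)
    -- `B₁` contains a strong Lefschetz element of `A`
    (l : A) (hl1 : l ∈ 𝒜 1) (hlB : l ∈ B)
    (hSLA : ∀ i ≤ c / 2,
      Set.BijOn (fun a => l ^ (c - 2 * i) * a) (𝒜 i) (𝒜 (c - i)))
    -- `B` has a symmetric Hilbert function
    (hsym : ∀ i ≤ c,
      Module.finrank K (𝒜 i ⊓ Subalgebra.toSubmodule B : Submodule K A)
        = Module.finrank K (𝒜 (c - i) ⊓ Subalgebra.toSubmodule B : Submodule K A)) :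
    -- `B` has the strong Lefschetz property
    ∃ m ∈ 𝒜 1 ⊓ Subalgebra.toSubmodule B, ∀ i ≤ c / 2,
      Set.BijOn (fun a => m ^ (c - 2 * i) * a)
        (𝒜 i ⊓ Subalgebra.toSubmodule B : Submodule K A)
        (𝒜 (c - i) ⊓ Subalgebra.toSubmodule B : Submodule K A) :=
  subring_theorem_general K A 𝒜 c B l hl1 hlB hSLA hsym
end

section
/- Let K have characteristic zero and B = K[x₁,…,xₙ]/(x₁²,…,xₙ²). Then e₁ = x₁+⋯+xₙ is a strong Lefschetz element for B: multiplication by e₁^{n−2i} : Bᵢ → B_{n−i} is bijective for all i ≤ ⌊n/2⌋. -/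
/-!
The squarefree monomials `x_s = ∏_{j ∈ s} x_j`, `s ⊆ {1, …, n}`, form a basis of `B`, so `Bᵢ` is
the free module on the `i`-th slice of the Boolean lattice, and multiplication by `e₁` becomes the
up operator `U` sending `s` to the sum of its one-element extensions. Together with the down
operator `D`, one has `DU - UD = n - 2i` on `Bᵢ`: an `sl₂`-action in which `Bᵢ` has weight
`n - 2i`. If `D v = 0` then `D^m U^m v = ∏_{j < m} (j + 1)(n - 2i - j) • v`, and in characteristic
zero this product is nonzero for `m = n - 2i`. If `U^{n-2i} v = 0`, the commutation relation shows
that `U^{n-2i+2}` kills `D v ∈ B_{i-1}`, so `D v = 0` by induction on `i`, and then `v = 0`. Hence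
`U^{n-2i} : Bᵢ → B_{n-i}` is injective, and bijective since both sides have dimension `C(n, i)`.
-/

open Finset Finsupp MvPolynomial

structure IsSl2Grading {R M : Type*} [CommRing R] [AddCommGroup M] [Module R M]
    (n : ℕ) (V : ℕ → Submodule R M) (U D : M →ₗ[R] M) : Prop where
  up_mem {i : ℕ} {v : M} : v ∈ V i → U v ∈ V (i + 1)
  down_mem {i : ℕ} {v : M} : v ∈ V (i + 1) → D v ∈ V i
  down_eq_zero {v : M} : v ∈ V 0 → D v = 0
  down_up {i : ℕ} {v : M} : v ∈ V i → D (U v) = U (D v) + ((n : R) - 2 * i) • v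

namespace IsSl2Grading

section CommRing

variable {R M : Type*} [CommRing R] [AddCommGroup M] [Module R M]
  {n : ℕ} {V : ℕ → Submodule R M} {U D : M →ₗ[R] M} {i : ℕ} {v : M}

theorem up_pow_mem (h : IsSl2Grading n V U D) (m : ℕ) (hv : v ∈ V i) :
    (U ^ m) v ∈ V (i + m) := by
  induction m with
  | zero => simpa using hv
  | succ m ih =>
    rw [pow_succ', Module.End.mul_apply, ← add_assoc]
    exact h.up_mem ih

theorem down_up_pow (h : IsSl2Grading n V U D) (m : ℕ) (hv : v ∈ V i) :
    D ((U ^ (m + 1)) v) =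
      (U ^ (m + 1)) (D v) + (((m : R) + 1) * ((n : R) - 2 * i - m)) • (U ^ m) v := by
  induction m generalizing i v with
  | zero => simpa using h.down_up hv
  | succ m ih =>
    rw [pow_succ, Module.End.mul_apply, ih (h.up_mem hv), h.down_up hv, map_add, map_smul,
      ← Module.End.mul_apply, ← pow_succ, ← Module.End.mul_apply (U ^ m), ← pow_succ]
    push_cast
    match_scalars <;> ring

theorem down_pow_up_pow (h : IsSl2Grading n V U D) (m : ℕ) (hv : v ∈ V i) (hDv : D v = 0) :
    (D ^ m) ((U ^ m) v) = (∏ j ∈ range m, ((j : R) + 1) * ((n : R) - 2 * i - j)) • v := by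
  induction m with
  | zero => simp
  | succ m ih =>
    rw [pow_succ D, Module.End.mul_apply, h.down_up_pow m hv, hDv, map_zero, zero_add, map_smul,
      ih, prod_range_succ, smul_smul, mul_comm]

theorem up_pow_succ_down_eq_zero (h : IsSl2Grading n V U D) {m : ℕ} (hv : v ∈ V i)
    (hU : (U ^ m) v = 0) : (U ^ (m + 1)) (D v) = 0 := by
  cases m with
  | zero => simp_all
  | succ m =>
    have key := congrArg U (h.down_up_pow m hv)
    rw [hU, map_zero, map_zero, map_add, map_smul, ← Module.End.mul_apply U, ← pow_succ',
      ← Module.End.mul_apply U, ← pow_succ', hU, smul_zero, add_zero] at key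
    exact key.symm

end CommRing

section Field

variable {K M : Type*} [Field K] [CharZero K] [AddCommGroup M] [Module K M]
  {n : ℕ} {V : ℕ → Submodule K M} {U D : M →ₗ[K] M} {i : ℕ} {v : M}

theorem eq_zero_of_down_eq_zero (h : IsSl2Grading n V U D) (hv : v ∈ V i) (hDv : D v = 0)
    (hU : (U ^ (n - 2 * i)) v = 0) : v = 0 := by
  have hc : ∏ j ∈ range (n - 2 * i), ((j : K) + 1) * ((n : K) - 2 * i - j) ≠ 0 := by
    refine prod_ne_zero_iff.mpr fun j hj => mul_ne_zero (Nat.cast_add_one_ne_zero j) ?_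
    have hj : 2 * i + j < n := by rw [mem_range] at hj; omega
    rw [sub_sub, sub_ne_zero]
    exact_mod_cast hj.ne'
  simpa [hU, hc] using (h.down_pow_up_pow (n - 2 * i) hv hDv).symm

theorem eq_zero_of_up_pow_eq_zero (h : IsSl2Grading n V U D) (hv : v ∈ V i)
    (hU : (U ^ (n - 2 * i)) v = 0) : v = 0 := by
  induction i generalizing v with
  | zero => exact h.eq_zero_of_down_eq_zero hv (h.down_eq_zero hv) hU
  | succ i ih =>
    obtain hm | hm := eq_or_ne (n - 2 * (i + 1)) 0
    · simpa [hm] using hU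
    refine h.eq_zero_of_down_eq_zero hv (ih (h.down_mem hv) ?_) hU
    rw [show n - 2 * i = 1 + (n - 2 * (i + 1) + 1) by omega, pow_add, Module.End.mul_apply,
      h.up_pow_succ_down_eq_zero hv hU, map_zero]

theorem bijOn_up_pow (h : IsSl2Grading n V U D) (hi : 2 * i ≤ n)
    [FiniteDimensional K (V i)] [FiniteDimensional K (V (n - i))]
    (hdim : Module.finrank K (V i) = Module.finrank K (V (n - i))) :
    Set.BijOn (U ^ (n - 2 * i)) (V i) (V (n - i)) := by
  have hmaps : Set.MapsTo (U ^ (n - 2 * i)) (V i) (V (n - i)) := fun v hv => by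
    simpa [show i + (n - 2 * i) = n - i by omega] using h.up_pow_mem (n - 2 * i) hv
  have hinj : Set.InjOn (U ^ (n - 2 * i)) (V i) := fun v hv w hw hvw =>
    sub_eq_zero.mp <| h.eq_zero_of_up_pow_eq_zero (sub_mem hv hw) (by rw [map_sub, hvw, sub_self])
  let f := (U ^ (n - 2 * i)).restrict hmaps
  have hsurj : Function.Surjective f :=
    (LinearMap.injective_iff_surjective_of_finrank_eq_finrank hdim).mp fun a b hab =>
      Subtype.ext (hinj a.2 b.2 (congrArg Subtype.val hab))
  refine ⟨hmaps, hinj, fun w hw => ?_⟩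
  obtain ⟨v, hv⟩ := hsurj ⟨w, hw⟩
  exact ⟨v, v.2, congrArg Subtype.val hv⟩

end Field

end IsSl2Grading

section BooleanLattice

variable (R α : Type*) [CommRing R]

def sliceSubmodule (i : ℕ) : Submodule R (Finset α →₀ R) :=
  supported R R {s | #s = i}

variable {R α} in
theorem sliceSubmodule_le_iff {i : ℕ} {p : Submodule R (Finset α →₀ R)} :
    sliceSubmodule R α i ≤ p ↔ ∀ s : Finset α, #s = i → single s 1 ∈ p := by
  simp [sliceSubmodule, supported_eq_span_single, Submodule.span_le, Set.subset_def]

variable {R α} in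
theorem finrank_sliceSubmodule [Fintype α] [Nontrivial R] (i : ℕ) :
    Module.finrank R (sliceSubmodule R α i) = (Fintype.card α).choose i := by
  rw [sliceSubmodule, (supportedEquivFinsupp _).finrank_eq, Module.finrank_finsupp_self,
    ← Fintype.card_finset_len]
  exact Fintype.card_congr (Equiv.subtypeEquivRight (by simp))

variable [DecidableEq α]

noncomputable def shadowMap : (Finset α →₀ R) →ₗ[R] Finset α →₀ R :=
  linearCombination R fun s => ∑ j ∈ s, single (s.erase j) 1

noncomputable def upShadowMap [Fintype α] : (Finset α →₀ R) →ₗ[R] Finset α →₀ R :=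
  linearCombination R fun s => ∑ j ∈ sᶜ, single (insert j s) 1

variable {R α}

theorem shadowMap_single (s : Finset α) :
    shadowMap R α (single s 1) = ∑ j ∈ s, single (s.erase j) 1 := by
  simp [shadowMap]

theorem upShadowMap_single [Fintype α] (s : Finset α) :
    upShadowMap R α (single s 1) = ∑ j ∈ sᶜ, single (insert j s) 1 := by
  simp [upShadowMap]

variable [Fintype α]

/- The sets `insert j (s.erase k)` with `k ∈ s`, `j ∉ s` occur on both sides; what is left is
`#sᶜ` copies of `s` on the left against `#s` copies on the right. -/
theorem shadowMap_upShadowMap_single (s : Finset α) :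
    shadowMap R α (upShadowMap R α (single s 1)) =
      upShadowMap R α (shadowMap R α (single s 1)) + ((#sᶜ : R) - #s) • single s 1 := by
  have h_down_insert : ∀ j ∈ sᶜ, shadowMap R α (single (insert j s) 1) =
      single s 1 + ∑ k ∈ s, single (insert j (s.erase k)) 1 := by
    intro j hj
    have hjs : j ∉ s := by simpa using hj
    rw [shadowMap_single, sum_insert hjs, erase_insert hjs]
    congr 1
    refine sum_congr rfl fun k hk => ?_
    rw [erase_insert_of_ne (ne_of_mem_of_not_mem hk hjs).symm]
  have h_up_erase : ∀ k ∈ s, upShadowMap R α (single (s.erase k) 1) =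
      single s 1 + ∑ j ∈ sᶜ, single (insert j (s.erase k)) 1 := by
    intro k hk
    rw [upShadowMap_single, compl_erase, sum_insert (by simpa using hk), insert_erase hk]
  rw [upShadowMap_single, shadowMap_single, map_sum, map_sum, sum_congr rfl h_down_insert,
    sum_congr rfl h_up_erase, sum_add_distrib, sum_add_distrib, Finset.sum_comm, sum_const,
    sum_const, ← Nat.cast_smul_eq_nsmul R, ← Nat.cast_smul_eq_nsmul R]
  module

theorem isSl2Grading_sliceSubmodule :
    IsSl2Grading (Fintype.card α) (sliceSubmodule R α) (upShadowMap R α) (shadowMap R α) where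
  up_mem {i _} hv := by
    refine (sliceSubmodule_le_iff (p := (sliceSubmodule R α (i + 1)).comap _)).mpr
      (fun s hs => ?_) hv
    rw [Submodule.mem_comap, upShadowMap_single]
    refine Submodule.sum_mem _ fun j hj => single_mem_supported R _ ?_
    rw [Set.mem_ofPred_eq, card_insert_of_notMem (by simpa using hj), hs]
  down_mem {i _} hv := by
    refine (sliceSubmodule_le_iff (p := (sliceSubmodule R α i).comap _)).mpr (fun s hs => ?_) hv
    rw [Submodule.mem_comap, shadowMap_single]
    refine Submodule.sum_mem _ fun j hj => single_mem_supported R _ ?_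
    rw [Set.mem_ofPred_eq, card_erase_of_mem hj, hs, Nat.add_sub_cancel]
  down_eq_zero {_} hv := by
    refine (sliceSubmodule_le_iff (p := LinearMap.ker _)).mpr (fun s hs => ?_) hv
    rw [card_eq_zero.mp hs, LinearMap.mem_ker, shadowMap_single, sum_empty]
  down_up {i _} hv := by
    refine (sliceSubmodule_le_iff (p := LinearMap.eqLocus (shadowMap R α ∘ₗ upShadowMap R α)
      (upShadowMap R α ∘ₗ shadowMap R α + ((Fintype.card α : R) - 2 * i) • LinearMap.id))).mpr
      (fun s hs => ?_) hv
    have hcard : (#sᶜ : R) - #s = (Fintype.card α : R) - 2 * i := by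
      rw [card_compl, Nat.cast_sub (card_le_univ s), hs]
      ring
    simp only [LinearMap.mem_eqLocus, LinearMap.comp_apply, LinearMap.add_apply,
      LinearMap.smul_apply, LinearMap.id_apply]
    rw [shadowMap_upShadowMap_single, hcard]

end BooleanLattice

section SquaresQuotient

variable (σ R : Type*) [CommRing R]

noncomputable def squaresIdeal : Ideal (MvPolynomial σ R) :=
  Ideal.span (Set.range fun j : σ => X j ^ 2)

noncomputable def squarefreeExponent (s : Finset σ) : σ →₀ ℕ :=
  ∑ j ∈ s, single j 1

noncomputable def squarefreeMonomialMap : (Finset σ →₀ R) →ₗ[R] MvPolynomial σ R :=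
  linearCombination R fun s => monomial (squarefreeExponent σ s) 1

variable {σ R}

theorem mem_squaresIdeal_iff {p : MvPolynomial σ R} :
    p ∈ squaresIdeal σ R ↔ ∀ d ∈ p.support, ∃ j, 2 ≤ d j := by
  have h_monomial : squaresIdeal σ R =
      Ideal.span ((fun d => monomial d (1 : R)) '' Set.range fun j => single j 2) := by
    simp [squaresIdeal, ← Set.range_comp, Function.comp_def, X_pow_eq_monomial]
  simp [h_monomial, mem_ideal_span_monomial_image]

theorem monomial_mem_squaresIdeal {d : σ →₀ ℕ} {j : σ} (h : 2 ≤ d j) (c : R) :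
    monomial d c ∈ squaresIdeal σ R :=
  mem_squaresIdeal_iff.mpr fun _ hd =>
    ⟨j, by rwa [Finset.mem_singleton.mp (support_monomial_subset hd)]⟩

theorem squarefreeExponent_apply [DecidableEq σ] (s : Finset σ) (j : σ) :
    squarefreeExponent σ s j = if j ∈ s then 1 else 0 := by
  simp [squarefreeExponent, Finsupp.finsetSum_apply, single_apply, eq_comm]

theorem squarefreeExponent_injective : Function.Injective (squarefreeExponent σ) := by
  classical
  intro s t h
  ext j
  have hj := DFunLike.congr_fun h j
  simp only [squarefreeExponent_apply] at hj
  split_ifs at hj <;> simp_all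

theorem degree_squarefreeExponent (s : Finset σ) : (squarefreeExponent σ s).degree = #s := by
  simp [squarefreeExponent]

theorem squarefreeExponent_insert [DecidableEq σ] {s : Finset σ} {j : σ} (h : j ∉ s) :
    squarefreeExponent σ (insert j s) = single j 1 + squarefreeExponent σ s := by
  rw [squarefreeExponent, squarefreeExponent, sum_insert h]

theorem eq_squarefreeExponent_support {d : σ →₀ ℕ} (hd : ∀ j, d j ≤ 1) :
    d = squarefreeExponent σ d.support := by
  classical
  ext j
  have := hd j
  simp only [squarefreeExponent_apply, Finsupp.mem_support_iff]
  split_ifs <;> omega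

theorem coeff_squarefreeMonomialMap (v : Finset σ →₀ R) (t : Finset σ) :
    coeff (squarefreeExponent σ t) (squarefreeMonomialMap σ R v) = v t := by
  classical
  simp [squarefreeMonomialMap, linearCombination_apply, Finsupp.sum, coeff_sum, coeff_monomial,
    squarefreeExponent_injective.eq_iff, eq_comm]

theorem injective_mk_squarefreeMonomialMap :
    Function.Injective
      ((Ideal.Quotient.mkₐ R (squaresIdeal σ R)).toLinearMap ∘ₗ squarefreeMonomialMap σ R) := by
  classical
  refine (injective_iff_map_eq_zero _).mpr fun v hv => ?_
  rw [LinearMap.comp_apply, AlgHom.toLinearMap_apply, Ideal.Quotient.mkₐ_eq_mk,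
    Ideal.Quotient.eq_zero_iff_mem, mem_squaresIdeal_iff] at hv
  ext t
  by_contra hvt
  obtain ⟨j, hj⟩ := hv _ (mem_support_iff.mpr (by rwa [coeff_squarefreeMonomialMap]))
  simp only [squarefreeExponent_apply] at hj
  split_ifs at hj <;> omega

theorem squarefreeMonomialMap_single (s : Finset σ) :
    squarefreeMonomialMap σ R (single s 1) = monomial (squarefreeExponent σ s) 1 := by
  simp [squarefreeMonomialMap]

theorem mk_squarefreeMonomialMap_upShadowMap [Fintype σ] [DecidableEq σ] (v : Finset σ →₀ R) :
    Ideal.Quotient.mkₐ R (squaresIdeal σ R) (squarefreeMonomialMap σ R (upShadowMap R σ v)) =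
      Ideal.Quotient.mkₐ R (squaresIdeal σ R) (∑ j, X j) *
        Ideal.Quotient.mkₐ R (squaresIdeal σ R) (squarefreeMonomialMap σ R v) := by
  suffices h : (Ideal.Quotient.mkₐ R (squaresIdeal σ R)).toLinearMap ∘ₗ
      squarefreeMonomialMap σ R ∘ₗ upShadowMap R σ =
      LinearMap.mulLeft R (Ideal.Quotient.mkₐ R (squaresIdeal σ R) (∑ j, X j)) ∘ₗ
        (Ideal.Quotient.mkₐ R (squaresIdeal σ R)).toLinearMap ∘ₗ squarefreeMonomialMap σ R from
    LinearMap.congr_fun h v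
  ext s
  have h_split : (∑ j, X j) * monomial (squarefreeExponent σ s) (1 : R) =
      ∑ j ∈ s, monomial (single j 1 + squarefreeExponent σ s) 1 +
        squarefreeMonomialMap σ R (upShadowMap R σ (single s 1)) := by
    rw [upShadowMap_single, map_sum, Finset.sum_mul, ← sum_add_sum_compl s]
    congr 1 <;> refine sum_congr rfl fun j hj => ?_
    · rw [X, monomial_mul, one_mul]
    · rw [X, monomial_mul, one_mul, squarefreeMonomialMap_single,
        squarefreeExponent_insert (by simpa using hj)]
  simp only [LinearMap.comp_apply, lsingle_apply, LinearMap.mulLeft_apply,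
    AlgHom.toLinearMap_apply, ← map_mul, squarefreeMonomialMap_single, Ideal.Quotient.mkₐ_eq_mk,
    Ideal.Quotient.eq]
  rw [h_split, sub_add_cancel_right]
  refine neg_mem (sum_mem fun j hj => monomial_mem_squaresIdeal (j := j) ?_ 1)
  simp [squarefreeExponent_apply, hj]

theorem mk_squarefreeMonomialMap_upShadowMap_pow [Fintype σ] [DecidableEq σ] (m : ℕ)
    (v : Finset σ →₀ R) :
    Ideal.Quotient.mkₐ R (squaresIdeal σ R)
        (squarefreeMonomialMap σ R ((upShadowMap R σ ^ m) v)) =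
      Ideal.Quotient.mkₐ R (squaresIdeal σ R) (∑ j, X j) ^ m *
        Ideal.Quotient.mkₐ R (squaresIdeal σ R) (squarefreeMonomialMap σ R v) := by
  induction m with
  | zero => simp
  | succ m ih =>
    rw [pow_succ', Module.End.mul_apply, mk_squarefreeMonomialMap_upShadowMap, ih, pow_succ',
      mul_assoc]

theorem map_mk_homogeneousSubmodule (i : ℕ) :
    (homogeneousSubmodule σ R i).map (Ideal.Quotient.mkₐ R (squaresIdeal σ R)).toLinearMap =
      (sliceSubmodule R σ i).map
        ((Ideal.Quotient.mkₐ R (squaresIdeal σ R)).toLinearMap ∘ₗ squarefreeMonomialMap σ R) := by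
  apply le_antisymm
  · rw [Submodule.map_le_iff_le_comap, homogeneousSubmodule_eq_finsupp_supported,
      AddMonoidAlgebra.supported_eq_span_single, Submodule.span_le]
    rintro _ ⟨d, hd, rfl⟩
    dsimp only
    rw [SetLike.mem_coe, Submodule.mem_comap, single_eq_monomial]
    by_cases hsq : ∀ j, d j ≤ 1
    · refine ⟨single d.support 1, single_mem_supported R _ ?_, ?_⟩
      · rw [Set.mem_ofPred_eq, ← degree_squarefreeExponent, ← eq_squarefreeExponent_support hsq]
        exact hd
      · rw [LinearMap.comp_apply, squarefreeMonomialMap_single,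
          ← eq_squarefreeExponent_support hsq]
    · obtain ⟨j, hj⟩ := not_forall.mp hsq
      rw [AlgHom.toLinearMap_apply, Ideal.Quotient.mkₐ_eq_mk,
        Ideal.Quotient.eq_zero_iff_mem.mpr (monomial_mem_squaresIdeal (not_le.mp hj) 1)]
      exact zero_mem _
  · rw [Submodule.map_le_iff_le_comap, sliceSubmodule_le_iff]
    intro s hs
    rw [Submodule.mem_comap, LinearMap.comp_apply, squarefreeMonomialMap_single]
    refine Submodule.mem_map_of_mem ?_
    exact isHomogeneous_monomial _ (by rw [degree_squarefreeExponent, hs])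

end SquaresQuotient

/-- `e₁ = x₁+⋯+xₙ` is a strong Lefschetz element for the quadratic monomial
complete intersection `B = K[x₁,…,xₙ]/(x₁²,…,xₙ²)`: multiplication by
`e₁^{n-2i} : Bᵢ → B_{n-i}` is bijective for all `i ≤ ⌊n/2⌋`. -/
theorem monomial_quadratic_complete_intersection_SLP
    (K : Type*) [Field K] [CharZero K] (n : ℕ)
    (I : Ideal (MvPolynomial (Fin n) K))
    (hI : I = Ideal.span (Set.range fun i : Fin n => (X i : MvPolynomial (Fin n) K) ^ 2))
    (π : MvPolynomial (Fin n) K →ₐ[K] (MvPolynomial (Fin n) K ⧸ I))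
    (hπ : π = Ideal.Quotient.mkₐ K I)
    (𝒜 : ℕ → Submodule K (MvPolynomial (Fin n) K ⧸ I))
    (h𝒜 : ∀ i, 𝒜 i = Submodule.map π.toLinearMap (homogeneousSubmodule (Fin n) K i)) :
    ∀ i ≤ n / 2,
      Set.BijOn (fun b => π (∑ j, X j) ^ (n - 2 * i) * b) (𝒜 i) (𝒜 (n - i)) := by
  obtain rfl : I = squaresIdeal (Fin n) K := hI
  subst hπ
  intro i hi
  have hsl2 := isSl2Grading_sliceSubmodule (R := K) (α := Fin n)
  rw [Fintype.card_fin] at hsl2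
  have hbij := hsl2.bijOn_up_pow (i := i) (by omega) (by
    rw [finrank_sliceSubmodule, finrank_sliceSubmodule, Fintype.card_fin,
      Nat.choose_symm (by omega)])
  have hcomm := mk_squarefreeMonomialMap_upShadowMap_pow (R := K) (σ := Fin n) (n - 2 * i)
  rw [h𝒜, h𝒜, map_mk_homogeneousSubmodule, map_mk_homogeneousSubmodule, Submodule.map_coe,
    Submodule.map_coe]
  refine Set.bijOn_image_image (fun v => hcomm v) hbij ?_
  rintro _ ⟨v, hv, rfl⟩ _ ⟨w, hw, rfl⟩ hvw
  simp only [LinearMap.comp_apply, AlgHom.toLinearMap_apply, ← hcomm] at hvw ⊢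
  rw [hbij.injOn hv hw (injective_mk_squarefreeMonomialMap hvw)]
end

section
/- Let K have characteristic zero, n = n₁ + ⋯ + n_r, and let the Young subgroup G = S_{n₁} × ⋯ × S_{n_r} act on B = K[x₁,…,xₙ]/(x₁²,…,xₙ²) by block-wise permutation of the variables. Then the invariant ring B^G is isomorphic as a graded K-algebra to K[y₁,…,y_r]/(y₁^{n₁+1},…,y_r^{n_r+1}), where yᵢ has degree one and maps to the sum of the variables in the i-th block. -/
/-!
The squarefree monomials `x^S` form a `K`-basis of `B`, permuted by the Young group, so an
invariant element has coordinates that depend only on the block cardinalities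
`(#(S ∩ block i))ᵢ` of `S`. Because `xⱼ² = 0`, the `k`-th power of the `i`-th block sum is
`k!` times the `k`-th elementary symmetric polynomial of that block; hence `y^v` is sent to
`(∏ vᵢ!)` times the sum of all `x^S` with block cardinalities `v`. Reading off coordinates, `y^v`
maps to zero exactly when some `vᵢ > nᵢ`, which identifies the kernel with `(yᵢ^(nᵢ+1))`, and,
dividing by the factorials (characteristic zero), every invariant is in the image.
-/

open MvPolynomial Finset

section SquareZero

open scoped Nat

variable {A ι : Type*} [CommSemiring A] [Fintype ι] [DecidableEq ι]

theorem sum_powersetCard_sum_compl_insert {M : Type*} [AddCommMonoid M]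
    (f : Finset ι → M) (k : ℕ) :
    ∑ S ∈ powersetCard k univ, ∑ j ∈ Sᶜ, f (insert j S)
      = (k + 1) • ∑ T ∈ powersetCard (k + 1) univ, f T := by
  have hcard : ∀ T ∈ powersetCard (k + 1) (univ : Finset ι), (k + 1) • f T = ∑ _j ∈ T, f T :=
    fun T hT => by rw [sum_const, (mem_powersetCard_univ.mp hT)]
  rw [smul_sum, sum_congr rfl hcard, sum_sigma', sum_sigma']
  refine sum_nbij' (fun p => ⟨insert p.2 p.1, p.2⟩) (fun p => ⟨p.1.erase p.2, p.2⟩)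
    ?_ ?_ ?_ ?_ fun _ _ => rfl
  all_goals
    rintro ⟨S, j⟩ hp
    simp only [mem_sigma, mem_powersetCard_univ, mem_compl] at hp ⊢
  · exact ⟨by rw [card_insert_of_notMem hp.2, hp.1], mem_insert_self _ _⟩
  · exact ⟨by rw [card_erase_of_mem hp.2, hp.1, Nat.add_sub_cancel], notMem_erase _ _⟩
  · simp [erase_insert hp.2]
  · simp [insert_erase hp.2]

variable {x : ι → A}

theorem sum_mul_sum_powersetCard_prod (hx : ∀ j, x j ^ 2 = 0) (k : ℕ) :
    (∑ j, x j) * ∑ S ∈ powersetCard k univ, ∏ j ∈ S, x j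
      = (k + 1) • ∑ T ∈ powersetCard (k + 1) univ, ∏ j ∈ T, x j := by
  have hS : ∀ S : Finset ι,
      (∑ j, x j) * ∏ j ∈ S, x j = ∑ j ∈ Sᶜ, ∏ j' ∈ insert j S, x j' := by
    intro S
    have hin : ∀ j ∈ S, x j * ∏ j' ∈ S, x j' = 0 := fun j hj => by
      rw [← mul_prod_erase S x hj, ← mul_assoc, ← sq, hx, zero_mul]
    rw [sum_mul, ← sum_add_sum_compl S, sum_eq_zero hin, zero_add]
    exact sum_congr rfl fun j hj => (prod_insert (mem_compl.mp hj)).symm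
  rw [mul_sum, sum_congr rfl fun S _ => hS S]
  exact sum_powersetCard_sum_compl_insert (fun T => ∏ j ∈ T, x j) k

theorem sum_pow_eq_factorial_smul_sum_powersetCard_prod (hx : ∀ j, x j ^ 2 = 0) (k : ℕ) :
    (∑ j, x j) ^ k = k ! • ∑ S ∈ powersetCard k univ, ∏ j ∈ S, x j := by
  induction k with
  | zero => simp
  | succ k ih =>
    rw [pow_succ', ih, mul_smul_comm, sum_mul_sum_powersetCard_prod hx, smul_smul,
      Nat.factorial_succ, mul_comm]

end SquareZero

section MonomialIdeal

variable {σ R : Type*} [CommSemiring R]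

variable (σ R) in
noncomputable abbrev idealOfVarsSq : Ideal (MvPolynomial σ R) :=
  Ideal.span (Set.range fun j => X j ^ 2)

theorem mem_span_X_pow_iff {m : σ → ℕ} {p : MvPolynomial σ R} :
    p ∈ Ideal.span (Set.range fun j => (X j : MvPolynomial σ R) ^ m j)
      ↔ ∀ d ∈ p.support, ∃ j, m j ≤ d j := by
  have hgen : (Set.range fun j => (X j : MvPolynomial σ R) ^ m j)
      = (fun d => monomial d (1 : R)) '' Set.range fun j => Finsupp.single j (m j) := by
    rw [← Set.range_comp]
    simp only [Function.comp_def, X_pow_eq_monomial]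
  simp [hgen, mem_ideal_span_monomial_image, Finsupp.single_le_iff]

theorem prod_X_eq_monomial (S : Finset σ) :
    ∏ j ∈ S, (X j : MvPolynomial σ R) = monomial (∑ j ∈ S, Finsupp.single j 1) 1 :=
  (monomial_sum_one S _).symm

end MonomialIdeal

section SquarefreeBasis

variable {σ R : Type*} [CommRing R]

theorem linearIndependent_mk_prod_X :
    LinearIndependent R fun S : Finset σ =>
      Ideal.Quotient.mkₐ R (idealOfVarsSq σ R) (∏ j ∈ S, X j) := by
  classical
  have hexp : Function.Injective fun S : Finset σ => ∑ j ∈ S, Finsupp.single j 1 :=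
    fun S T h => by simpa [Finsupp.toMultiset_sum_single] using congrArg Finsupp.toMultiset h
  have hli : LinearIndependent R fun S : Finset σ => (∏ j ∈ S, X j : MvPolynomial σ R) := by
    simp_rw [prod_X_eq_monomial]
    exact (basisMonomials σ R).linearIndependent.comp _ hexp
  refine hli.map (f := (Ideal.Quotient.mkₐ R _).toLinearMap) (Submodule.disjoint_def.mpr ?_)
  intro p hp hker
  have hsqfree : p ∈ restrictSupport R {d | ∀ j, d j ≤ 1} := by
    refine Submodule.span_le.mpr ?_ hp
    rintro _ ⟨S, rfl⟩
    simp only [SetLike.mem_coe, prod_X_eq_monomial, monomial_mem_restrictSupport]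
    refine .inl fun j => ?_
    rw [Finsupp.finsetSum_apply]
    simp only [Finsupp.single_apply, sum_ite_eq']
    split_ifs <;> simp
  rw [LinearMap.mem_ker, AlgHom.toLinearMap_apply, Ideal.Quotient.mkₐ_eq_mk,
    Ideal.Quotient.eq_zero_iff_mem, mem_span_X_pow_iff] at hker
  rw [← support_eq_empty, eq_empty_iff_forall_notMem]
  intro d hd
  obtain ⟨j, hj⟩ := hker d hd
  have := (mem_restrictSupport_iff R).mp hsqfree hd j
  omega

theorem top_le_span_mk_prod_X :
    ⊤ ≤ Submodule.span R (Set.range fun S : Finset σ =>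
      Ideal.Quotient.mkₐ R (idealOfVarsSq σ R) (∏ j ∈ S, X j)) := by
  classical
  rintro x -
  obtain ⟨p, rfl⟩ := Ideal.Quotient.mkₐ_surjective R _ x
  induction p using MvPolynomial.induction_on' with
  | add p q hp hq => rw [map_add]; exact add_mem hp hq
  | monomial d c =>
    by_cases hd : ∀ j, d j ≤ 1
    · have hprod : monomial d c = c • ∏ j ∈ d.support, (X j : MvPolynomial σ R) := by
        rw [smul_eq_C_mul, ← mul_one c, ← C_mul_monomial, mul_one, ← prod_X_pow_eq_monomial]
        congr 1
        refine prod_congr rfl fun j hj => ?_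
        rw [le_antisymm (hd j) (Nat.one_le_iff_ne_zero.mpr (Finsupp.mem_support_iff.mp hj)),
          pow_one]
      rw [hprod, map_smul]
      exact Submodule.smul_mem _ _ (Submodule.subset_span ⟨_, rfl⟩)
    · have hzero : Ideal.Quotient.mkₐ R (idealOfVarsSq σ R) (monomial d c) = 0 := by
        rw [Ideal.Quotient.mkₐ_eq_mk, Ideal.Quotient.eq_zero_iff_mem, mem_span_X_pow_iff]
        intro d' hd'
        push Not at hd
        obtain ⟨j, hj⟩ := hd
        exact ⟨j, mem_singleton.mp (support_monomial_subset hd') ▸ hj⟩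
      rw [hzero]
      exact zero_mem _

variable (σ R) in
noncomputable def squarefreeBasis :
    Module.Basis (Finset σ) R (MvPolynomial σ R ⧸ idealOfVarsSq σ R) :=
  .mk linearIndependent_mk_prod_X top_le_span_mk_prod_X

theorem squarefreeBasis_apply (S : Finset σ) :
    squarefreeBasis σ R S = Ideal.Quotient.mkₐ R (idealOfVarsSq σ R) (∏ j ∈ S, X j) :=
  Module.Basis.mk_apply _ _ _

end SquarefreeBasis

theorem Module.Basis.repr_apply_equiv_eq_of_map_eq {ι R M : Type*} [Fintype ι] [Semiring R]
    [AddCommMonoid M] [Module R M] (b : Basis ι R M) {f : M →ₗ[R] M} {e : ι ≃ ι}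
    (hf : ∀ i, f (b i) = b (e i)) {m : M} (hm : f m = m) (i : ι) :
    b.repr m (e i) = b.repr m i := by
  have hsum : ∑ j, b.repr m (e.symm j) • b j = m := by
    rw [← e.sum_comp]
    simp only [Equiv.symm_apply_apply, ← hf, ← map_smul, ← map_sum, b.sum_repr, hm]
  conv_lhs => rw [← hsum, b.repr_sum_self]
  simp

noncomputable def finsetSigmaEquivPi {ι : Type*} {α : ι → Type*} [Fintype ι] :
    Finset (Σ i, α i) ≃ ∀ i, Finset (α i) where
  toFun S i := S.preimage (Sigma.mk i) sigma_mk_injective.injOn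
  invFun t := univ.sigma t
  left_inv S := by ext ⟨i, a⟩; simp
  right_inv t := by ext i a; simp

section Young

open scoped Nat Pointwise

variable (R : Type*) [CommRing R] {ι : Type*} (α : ι → Type*)

noncomputable def squarefreeBasisSigma [Fintype ι] :
    Module.Basis (∀ i, Finset (α i)) R
      (MvPolynomial (Σ i, α i) R ⧸ idealOfVarsSq (Σ i, α i) R) :=
  (squarefreeBasis _ R).reindex finsetSigmaEquivPi

noncomputable def blockSum [∀ i, Fintype (α i)] (i : ι) :
    MvPolynomial (Σ i, α i) R ⧸ idealOfVarsSq (Σ i, α i) R :=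
  Ideal.Quotient.mkₐ R _ (∑ a, X ⟨i, a⟩)

variable {R α}

theorem squarefreeBasisSigma_apply [Fintype ι] (t : ∀ i, Finset (α i)) :
    squarefreeBasisSigma R α t
      = Ideal.Quotient.mkₐ R (idealOfVarsSq (Σ i, α i) R) (∏ i, ∏ a ∈ t i, X ⟨i, a⟩) := by
  rw [squarefreeBasisSigma, Module.Basis.reindex_apply, squarefreeBasis_apply, ← prod_sigma]
  rfl

theorem blockSum_pow [∀ i, Fintype (α i)] [∀ i, DecidableEq (α i)] (i : ι) (k : ℕ) :
    blockSum R α i ^ k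
      = k ! • ∑ S ∈ powersetCard k univ,
          Ideal.Quotient.mkₐ R (idealOfVarsSq (Σ i, α i) R) (∏ a ∈ S, X ⟨i, a⟩) := by
  have hsq : ∀ a : α i, Ideal.Quotient.mkₐ R (idealOfVarsSq (Σ i, α i) R) (X ⟨i, a⟩) ^ 2 = 0 :=
    fun a => by
      rw [← map_pow, Ideal.Quotient.mkₐ_eq_mk, Ideal.Quotient.eq_zero_iff_mem]
      exact Ideal.subset_span ⟨⟨i, a⟩, rfl⟩
  simp only [blockSum, map_sum, map_prod]
  exact sum_pow_eq_factorial_smul_sum_powersetCard_prod hsq k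

theorem blockSum_pow_eq_zero [∀ i, Fintype (α i)] {i : ι} {k : ℕ}
    (hk : Fintype.card (α i) < k) : blockSum R α i ^ k = 0 := by
  classical
  rw [blockSum_pow, powersetCard_eq_empty.mpr (by simpa using hk), sum_empty, smul_zero]

theorem prod_blockSum_pow [Fintype ι] [DecidableEq ι] [∀ i, Fintype (α i)] (v : ι → ℕ) :
    ∏ i, blockSum R α i ^ v i
      = (∏ i, (v i)!) • ∑ t ∈ Fintype.piFinset fun i => powersetCard (v i) univ,
          squarefreeBasisSigma R α t := by
  classical
  simp only [blockSum_pow, nsmul_eq_mul, prod_mul_distrib, Nat.cast_prod, prod_univ_sum,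
    squarefreeBasisSigma_apply, map_prod]

noncomputable def blockCards [Fintype ι] (t : ∀ i, Finset (α i)) : ι →₀ ℕ :=
  Finsupp.equivFunOnFinite.symm fun i => #(t i)

theorem blockCards_apply [Fintype ι] (t : ∀ i, Finset (α i)) (i : ι) : blockCards t i = #(t i) :=
  rfl

theorem mem_piFinset_powersetCard_iff [Fintype ι] [DecidableEq ι] [∀ i, Fintype (α i)]
    {v : ι →₀ ℕ} {t : ∀ i, Finset (α i)} :
    t ∈ Fintype.piFinset (fun i => powersetCard (v i) univ) ↔ blockCards t = v := by
  simp [Fintype.mem_piFinset, Finsupp.ext_iff, blockCards_apply]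

theorem exists_blockCards_eq [Fintype ι] [∀ i, Fintype (α i)] {v : ι →₀ ℕ}
    (hv : ∀ i, v i ≤ Fintype.card (α i)) : ∃ t : ∀ i, Finset (α i), blockCards t = v := by
  choose t _ ht using fun i =>
    exists_subset_card_eq (s := (univ : Finset (α i))) (by simpa using hv i)
  exact ⟨t, Finsupp.ext ht⟩

theorem repr_aeval_blockSum [Fintype ι] [DecidableEq ι] [∀ i, Fintype (α i)]
    (q : MvPolynomial ι R) (t : ∀ i, Finset (α i)) :
    (squarefreeBasisSigma R α).repr (aeval (blockSum R α) q) t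
      = (∏ i, (#(t i))!) • coeff (blockCards t) q := by
  classical
  induction q using MvPolynomial.induction_on' with
  | monomial v c =>
    rw [aeval_monomial, Finsupp.prod_fintype _ _ (by simp), prod_blockSum_pow, ← Algebra.smul_def,
      map_smul, map_nsmul, map_sum]
    simp only [Module.Basis.repr_self, Finsupp.smul_apply, Finsupp.finsetSum_apply]
    simp only [Finsupp.single_apply, sum_ite_eq', mem_piFinset_powersetCard_iff, coeff_monomial]
    obtain rfl | hv := eq_or_ne v (blockCards t)
    · simp [blockCards_apply, mul_comm]
    · simp [hv, hv.symm]
  | add p q hp hq => simp only [map_add, Finsupp.add_apply, hp, hq, coeff_add, smul_add]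

theorem ker_aeval_blockSum {K : Type*} [Field K] [CharZero K] [Fintype ι] [∀ i, Fintype (α i)] :
    RingHom.ker (aeval (blockSum K α))
      = Ideal.span (Set.range fun i => (X i : MvPolynomial ι K) ^ (Fintype.card (α i) + 1)) := by
  classical
  refine le_antisymm (fun q hq => mem_span_X_pow_iff.mpr fun d hd => ?_) (Ideal.span_le.mpr ?_)
  · by_contra! hsmall
    obtain ⟨t, rfl⟩ := exists_blockCards_eq fun i => Nat.lt_succ_iff.mp (hsmall i)
    have hrepr := repr_aeval_blockSum q t
    rw [RingHom.mem_ker.mp hq, map_zero, Finsupp.zero_apply, eq_comm, smul_eq_zero] at hrepr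
    exact mem_support_iff.mp hd
      (hrepr.resolve_left (prod_ne_zero_iff.mpr fun i _ => Nat.factorial_ne_zero _))
  · rintro _ ⟨i, rfl⟩
    rw [SetLike.mem_coe, RingHom.mem_ker, map_pow, aeval_X,
      blockSum_pow_eq_zero (Nat.lt_succ_self _)]

theorem mem_range_aeval_blockSum {K : Type*} [Field K] [CharZero K] [Fintype ι]
    [∀ i, Fintype (α i)] {x : MvPolynomial (Σ i, α i) K ⧸ idealOfVarsSq (Σ i, α i) K}
    (hx : Function.FactorsThrough ((squarefreeBasisSigma K α).repr x) blockCards) :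
    x ∈ Set.range (aeval (blockSum K α) : MvPolynomial ι K → _) := by
  classical
  set c := Function.extend blockCards ((squarefreeBasisSigma K α).repr x) 0
  refine ⟨∑ v ∈ (univ : Finset (∀ i, Finset (α i))).image blockCards,
    monomial v (c v / ∏ i, (v i)!), (squarefreeBasisSigma K α).ext_elem fun t => ?_⟩
  rw [repr_aeval_blockSum, coeff_sum]
  simp only [coeff_monomial, sum_ite_eq', mem_image_of_mem _ (mem_univ t), if_true, c,
    hx.extend_apply, nsmul_eq_mul, blockCards_apply]
  exact mul_div_cancel₀ _
    (Nat.cast_ne_zero.mpr (prod_ne_zero_iff.mpr fun i _ => Nat.factorial_ne_zero _))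

theorem exists_smul_eq_of_blockCards_eq [Fintype ι] [∀ i, DecidableEq (α i)]
    {s t : ∀ i, Finset (α i)} (h : blockCards s = blockCards t) :
    ∃ τ : ∀ i, Equiv.Perm (α i), τ • s = t := by
  have hblock : ∀ i, ∃ g : Equiv.Perm (α i), g • s i = t i := fun i => by
    have := Set.powersetCard.isPretransitive (α := α i) (n := #(t i))
    obtain ⟨g, hg⟩ := MulAction.exists_smul_eq (Equiv.Perm (α i))
      (⟨s i, DFunLike.congr_fun h i⟩ : Set.powersetCard (α i) #(t i)) ⟨t i, rfl⟩
    exact ⟨g, by simpa using congrArg Subtype.val hg⟩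
  choose τ hτ using hblock
  exact ⟨τ, funext hτ⟩

theorem factorsThrough_repr_blockCards [Fintype ι] [∀ i, Fintype (α i)]
    [∀ i, DecidableEq (α i)] {M : Type*} [AddCommMonoid M] [Module R M]
    (b : Module.Basis (∀ i, Finset (α i)) R M)
    {f : (∀ i, Equiv.Perm (α i)) → M →ₗ[R] M} (hf : ∀ τ t, f τ (b t) = b (τ • t)) {x : M}
    (hx : ∀ τ, f τ x = x) : Function.FactorsThrough (b.repr x) blockCards := by
  classical
  intro t t' h
  obtain ⟨τ, rfl⟩ := exists_smul_eq_of_blockCards_eq h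
  exact (b.repr_apply_equiv_eq_of_map_eq (e := MulAction.toPerm τ) (hf τ) (hx τ) t).symm

theorem rename_sigmaCongrRight_prod_X [Fintype ι] [∀ i, DecidableEq (α i)]
    (τ : ∀ i, Equiv.Perm (α i)) (t : ∀ i, Finset (α i)) :
    rename (Equiv.sigmaCongrRight τ) (∏ i, ∏ a ∈ t i, X ⟨i, a⟩ : MvPolynomial (Σ i, α i) R)
      = ∏ i, ∏ a ∈ (τ • t) i, X ⟨i, a⟩ := by
  simp only [map_prod, rename_X, Equiv.sigmaCongrRight_apply, Pi.smul_apply',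
    Finset.smul_finset_def, Equiv.Perm.smul_def]
  refine prod_congr rfl fun i _ => ?_
  rw [prod_image fun a _ b _ h => (τ i).injective h]

theorem rename_sigmaCongrRight_sum_X [∀ i, Fintype (α i)] (τ : ∀ i, Equiv.Perm (α i)) (i : ι) :
    rename (Equiv.sigmaCongrRight τ) (∑ a, X ⟨i, a⟩ : MvPolynomial (Σ i, α i) R)
      = ∑ a, X ⟨i, a⟩ := by
  simp only [map_sum, rename_X, Equiv.sigmaCongrRight_apply]
  exact Equiv.sum_comp (τ i) fun a => (X ⟨i, a⟩ : MvPolynomial (Σ i, α i) R)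

end Young

theorem invariants_of_quadratic_monomial_ci_by_young_subgroup_general
    (K : Type*) [Field K] [CharZero K] (r : ℕ) (nb : Fin r → ℕ)
    (I : Ideal (MvPolynomial (Σ i : Fin r, Fin (nb i)) K))
    (hI : I = Ideal.span (Set.range fun j : Σ i : Fin r, Fin (nb i) =>
      (X j : MvPolynomial (Σ i : Fin r, Fin (nb i)) K) ^ 2))
    (J : Ideal (MvPolynomial (Fin r) K))
    (hJ : J = Ideal.span (Set.range fun i : Fin r =>
      (X i : MvPolynomial (Fin r) K) ^ (nb i + 1)))
    -- the induced action of the Young subgroup on `B = R/I`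
    (act : (∀ i, Equiv.Perm (Fin (nb i))) →
      (MvPolynomial (Σ i : Fin r, Fin (nb i)) K ⧸ I) →ₐ[K]
      (MvPolynomial (Σ i : Fin r, Fin (nb i)) K ⧸ I))
    (hact : ∀ τ p, act τ (Ideal.Quotient.mkₐ K I p)
      = Ideal.Quotient.mkₐ K I (rename (Equiv.sigmaCongrRight τ) p)) :
    ∃ φ : (MvPolynomial (Fin r) K ⧸ J) →ₐ[K]
        (MvPolynomial (Σ i : Fin r, Fin (nb i)) K ⧸ I),
      Function.Injective φ ∧
      -- the image of `φ` is exactly the ring of invariants `B^G`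
      Set.range φ = {b | ∀ τ, act τ b = b} ∧
      -- `yᵢ` maps to the sum of the variables in the `i`-th block
      (∀ i : Fin r, φ (Ideal.Quotient.mkₐ K J (X i))
        = Ideal.Quotient.mkₐ K I (∑ j : Fin (nb i), X ⟨i, j⟩)) := by
  classical
  subst hI
  have hker : J = RingHom.ker (aeval (blockSum K fun i => Fin (nb i))) := by
    simpa only [ker_aeval_blockSum, Fintype.card_fin] using hJ
  subst hker
  set b := squarefreeBasisSigma K fun i => Fin (nb i)
  open scoped Pointwise in
  have hact_basis : ∀ τ t, act τ (b t) = b (τ • t) := fun τ t => by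
    rw [squarefreeBasisSigma_apply, hact, rename_sigmaCongrRight_prod_X,
      squarefreeBasisSigma_apply]
  have hact_blockSum : ∀ τ i, act τ (blockSum K _ i) = blockSum K _ i := fun τ i => by
    rw [blockSum, hact, rename_sigmaCongrRight_sum_X]
  refine ⟨Ideal.kerLiftAlg _, Ideal.kerLiftAlg_injective _, ?_, fun i => aeval_X _ i⟩
  ext x
  constructor
  · rintro ⟨y, rfl⟩ τ
    obtain ⟨q, rfl⟩ := Ideal.Quotient.mk_surjective y
    rw [Ideal.kerLiftAlg_mk, ← AlgHom.comp_apply, comp_aeval]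
    simp only [hact_blockSum]
  · intro hx
    obtain ⟨q, rfl⟩ := mem_range_aeval_blockSum
      (factorsThrough_repr_blockCards b (f := fun τ => (act τ).toLinearMap) hact_basis hx)
    exact ⟨Ideal.Quotient.mk _ q, rfl⟩

/-- Remark 5.3: the invariant ring of `B = K[x₁,…,xₙ]/(x₁²,…,xₙ²)` under the
Young subgroup `G = S_{n₁} × ⋯ × S_{n_r}` (block-wise permutation of the
variables, the variables being indexed by the sigma type `Σ i, Fin (nb i)`) is
isomorphic, as a graded `K`-algebra, to the monomial complete intersection
`K[y₁,…,y_r]/(y₁^{n₁+1},…,y_r^{n_r+1})`, where `yᵢ` (of degree one) maps to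
the sum of the variables in the `i`-th block. -/
theorem invariants_of_quadratic_monomial_ci_by_young_subgroup
    (K : Type*) [Field K] [CharZero K] (r : ℕ) (nb : Fin r → ℕ)
    (hnb : ∀ i, 0 < nb i)
    (I : Ideal (MvPolynomial (Σ i : Fin r, Fin (nb i)) K))
    (hI : I = Ideal.span (Set.range fun j : Σ i : Fin r, Fin (nb i) =>
      (X j : MvPolynomial (Σ i : Fin r, Fin (nb i)) K) ^ 2))
    (J : Ideal (MvPolynomial (Fin r) K))
    (hJ : J = Ideal.span (Set.range fun i : Fin r =>
      (X i : MvPolynomial (Fin r) K) ^ (nb i + 1)))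
    -- the induced action of the Young subgroup on `B = R/I`
    (act : (∀ i, Equiv.Perm (Fin (nb i))) →
      (MvPolynomial (Σ i : Fin r, Fin (nb i)) K ⧸ I) →ₐ[K]
      (MvPolynomial (Σ i : Fin r, Fin (nb i)) K ⧸ I))
    (hact : ∀ τ p, act τ (Ideal.Quotient.mkₐ K I p)
      = Ideal.Quotient.mkₐ K I (rename (Equiv.sigmaCongrRight τ) p)) :
    ∃ φ : (MvPolynomial (Fin r) K ⧸ J) →ₐ[K]
        (MvPolynomial (Σ i : Fin r, Fin (nb i)) K ⧸ I),
      Function.Injective φ ∧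
      -- the image of `φ` is exactly the ring of invariants `B^G`
      Set.range φ = {b | ∀ τ, act τ b = b} ∧
      -- `yᵢ` maps to the sum of the variables in the `i`-th block
      (∀ i : Fin r, φ (Ideal.Quotient.mkₐ K J (X i))
        = Ideal.Quotient.mkₐ K I (∑ j : Fin (nb i), X ⟨i, j⟩)) :=
  invariants_of_quadratic_monomial_ci_by_young_subgroup_general K r nb I hI J hJ act hact
end

section
/- Let K have characteristic zero and d, n positive integers. The ideal (x₁^d, x₂^d, …, xₙ^d) ∩ K[x₁,…,xₙ]^{Sₙ} of the ring of symmetric polynomials is generated by the power sum symmetric polynomials p_d, p_{d+1}, …, p_{d+n−1}, where p_k = x₁^k + ⋯ + xₙ^k. -/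
/-!
Write a symmetric `f` in the ideal as `∑ gᵢ xᵢ^d`. Then `n! f = ∑_σ σ f` is the sum of the
symmetrizations of the `gᵢ xᵢ^d`, so it suffices to write each of these as `∑ₖ cₖ p_{d+k}` with
symmetric `cₖ`; after a transposition we may take `i = 0`.

Write `Sₙ` as the union of the cosets `(0 p) · Stab(0)` of transpositions. Then the
symmetrization of `g x₀^d` is `∑ₚ (0 p) · (H x₀^d)`, where `H` is the sum of the `τ g` over
`τ ∈ Stab(0)`. As a polynomial in `x₀`, `H` has coefficients that are symmetric in
`x₁, …, xₙ₋₁`. These coefficients are therefore polynomials in the elementary symmetric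
polynomials `e'ⱼ` of those variables, and each `e'ⱼ` lies in `Sym[x₀]` because
`eⱼ₊₁ = e'ⱼ₊₁ + x₀ e'ⱼ`. The variable `x₀` is a root of the monic polynomial `∏ⱼ (T - xⱼ)`,
whose coefficients are symmetric, so reducing modulo it gives `H = ∑_{k<n} cₖ x₀^k` with
symmetric `cₖ`. Finally `∑ₚ (0 p) · (cₖ x₀^{k+d}) = cₖ p_{d+k}`.
-/

open Equiv Equiv.Perm MvPolynomial

theorem Multiset.esymm_cons_succ {R : Type*} [CommSemiring R] (a : R) (s : Multiset R) (j : ℕ) :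
    (a ::ₘ s).esymm (j + 1) = s.esymm (j + 1) + a * s.esymm j := by
  simp [Multiset.esymm, Multiset.sum_map_mul_left]

theorem Equiv.Perm.decomposeFin_symm_eq_swap_mul {m : ℕ} (p : Fin (m + 1)) (e : Perm (Fin m)) :
    decomposeFin.symm (p, e) = swap 0 p * decomposeFin.symm (0, e) := by
  ext x
  refine Fin.cases ?_ (fun j => ?_) x <;> simp [decomposeFin_symm_apply_succ]

namespace MvPolynomial

section Symmetrize

variable {σ R : Type*} [CommSemiring R] [Fintype σ] [DecidableEq σ]

/-- The Reynolds operator without its factor `1 / |Perm σ|`, so that it makes sense over any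
ring. -/
noncomputable def symmetrize : MvPolynomial σ R →ₗ[R] MvPolynomial σ R :=
  ∑ e : Perm σ, (rename e).toLinearMap

theorem symmetrize_apply (p : MvPolynomial σ R) :
    symmetrize p = ∑ e : Perm σ, rename e p := by
  simp [symmetrize]

theorem isSymmetric_symmetrize (p : MvPolynomial σ R) : (symmetrize p).IsSymmetric := by
  intro τ
  simp only [symmetrize_apply, map_sum, rename_rename]
  exact Fintype.sum_equiv (Equiv.mulLeft τ) _ _ fun e => rfl

theorem symmetrize_rename (τ : Perm σ) (p : MvPolynomial σ R) :
    symmetrize (rename τ p) = symmetrize p := by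
  simp only [symmetrize_apply, rename_rename]
  exact Fintype.sum_equiv (Equiv.mulRight τ) _ _ fun e => rfl

theorem symmetrize_of_isSymmetric {p : MvPolynomial σ R} (hp : p.IsSymmetric) :
    symmetrize p = (Fintype.card σ).factorial • p := by
  simp [symmetrize_apply, hp _, Fintype.card_perm]

end Symmetrize

theorem mem_span_symmetricSubalgebra_range_iff {σ ι R : Type*} [CommSemiring R] [Fintype ι]
    {v : ι → MvPolynomial σ R} {f : MvPolynomial σ R} :
    f ∈ Submodule.span (symmetricSubalgebra σ R) (Set.range v) ↔
      ∃ c : ι → MvPolynomial σ R, (∀ k, (c k).IsSymmetric) ∧ f = ∑ k, c k * v k := by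
  rw [Submodule.mem_span_range_iff_exists_fun]
  constructor
  · rintro ⟨c, rfl⟩
    exact ⟨fun k => c k, fun k => (c k).2, rfl⟩
  · rintro ⟨c, hc, rfl⟩
    exact ⟨fun k => ⟨c k, hc k⟩, rfl⟩

section AdjoinVariable

variable {σ R : Type*} [CommRing R] [Nontrivial R] [Fintype σ]

theorem exists_monic_aeval_X_eq_zero (i : σ) :
    ∃ P : Polynomial (symmetricSubalgebra σ R),
      P.Monic ∧ P.natDegree = Fintype.card σ ∧ Polynomial.aeval (X i : MvPolynomial σ R) P = 0 := by
  set Q : Polynomial (MvPolynomial σ R) := ∏ j, (Polynomial.X - Polynomial.C (X j))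
  have hQ_monic : Q.Monic :=
    Polynomial.monic_prod_of_monic _ _ fun j _ => Polynomial.monic_X_sub_C _
  have hQ_invariant (e : Perm σ) : Q.map (rename (R := R) e).toRingHom = Q := by
    simp only [Q, Polynomial.map_prod, Polynomial.map_sub, Polynomial.map_X, Polynomial.map_C]
    exact Fintype.prod_equiv e _ _ fun j => by simp
  have hQ_lifts : Q ∈ Polynomial.lifts (algebraMap (symmetricSubalgebra σ R) _) := by
    refine (Polynomial.lifts_iff_coeff_lifts _).2 fun k => ⟨⟨Q.coeff k, fun e => ?_⟩, rfl⟩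
    simpa using congrArg (Polynomial.coeff · k) (hQ_invariant e)
  obtain ⟨P, hPQ, hdeg, hmonic⟩ := Polynomial.lifts_and_natDegree_eq_and_monic hQ_lifts hQ_monic
  refine ⟨P, hmonic, ?_, ?_⟩
  · rw [hdeg, Polynomial.natDegree_finsetProd_X_sub_C_eq_card, Finset.card_univ]
  · rw [← Polynomial.eval_map_algebraMap, hPQ, Polynomial.eval_prod]
    exact Finset.prod_eq_zero (Finset.mem_univ i) (by simp)

theorem exists_eq_sum_smul_X_pow_of_mem_adjoin {i : σ} {h : MvPolynomial σ R}
    (hh : h ∈ Algebra.adjoin (symmetricSubalgebra σ R) {X i}) :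
    ∃ c : ℕ → symmetricSubalgebra σ R,
      h = ∑ k ∈ Finset.range (Fintype.card σ), c k • X i ^ k := by
  rw [Algebra.adjoin_singleton_eq_range_aeval, AlgHom.mem_range] at hh
  obtain ⟨q, rfl⟩ := hh
  obtain ⟨P, hmonic, hdeg, hroot⟩ := exists_monic_aeval_X_eq_zero (R := R) i
  have hP : P ≠ 1 := by
    rintro rfl
    have : Nonempty σ := ⟨i⟩
    exact Fintype.card_ne_zero (hdeg.symm.trans Polynomial.natDegree_one)
  have hq : Polynomial.aeval (X i : MvPolynomial σ R) q = Polynomial.aeval (X i) (q %ₘ P) := by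
    conv_lhs => rw [← Polynomial.modByMonic_add_div q P]
    simp [hroot]
  refine ⟨(q %ₘ P).coeff, ?_⟩
  rw [hq]
  exact Polynomial.aeval_eq_sum_range' (hdeg ▸ Polynomial.natDegree_modByMonic_lt q hmonic hP) _

end AdjoinVariable

section FinSucc

variable {R : Type*} [CommSemiring R] {m : ℕ}

theorem esymm_fin_succ (j : ℕ) :
    esymm (Fin (m + 1)) R (j + 1) =
      rename Fin.succ (esymm (Fin m) R (j + 1)) + X 0 * rename Fin.succ (esymm (Fin m) R j) := by
  simp only [rename_eq_aeval, aeval_esymm_eq_multiset_esymm]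
  rw [esymm_eq_multiset_esymm, Fin.univ_succ]
  simp only [Finset.cons_val, Multiset.map_cons, Finset.map_val, Multiset.map_map]
  exact Multiset.esymm_cons_succ _ _ _

theorem finSuccEquiv_symm_C (q : MvPolynomial (Fin m) R) :
    (finSuccEquiv R m).symm (Polynomial.C q) = rename Fin.succ q := by
  rw [AlgEquiv.symm_apply_eq]
  have : (finSuccEquiv R m).toAlgHom.comp (rename Fin.succ) = Polynomial.CAlgHom := by
    ext j
    simp [finSuccEquiv_X_succ]
  exact (DFunLike.congr_fun this q).symm

theorem finSuccEquiv_rename_decomposeFin_symm (e : Perm (Fin m))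
    (f : MvPolynomial (Fin (m + 1)) R) :
    finSuccEquiv R m (rename (decomposeFin.symm (0, e)) f) =
      (finSuccEquiv R m f).map (rename (R := R) e) := by
  have : (finSuccEquiv R m).toAlgHom.comp (rename (decomposeFin.symm (0, e))) =
      (Polynomial.mapAlgHom (rename e)).comp (finSuccEquiv R m).toAlgHom := by
    ext i : 1
    refine Fin.cases ?_ (fun j => ?_) i <;>
      simp [finSuccEquiv_X_zero, finSuccEquiv_X_succ, decomposeFin_symm_apply_zero,
        decomposeFin_symm_apply_succ]
  exact DFunLike.congr_fun this f

theorem symmetrize_eq_sum_rename_swap (f : MvPolynomial (Fin (m + 1)) R) :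
    symmetrize f =
      ∑ p, rename (swap 0 p) (∑ e : Perm (Fin m), rename (decomposeFin.symm (0, e)) f) := by
  rw [symmetrize_apply, ← decomposeFin.symm.sum_comp, Fintype.sum_prod_type]
  simp only [map_sum, rename_rename]
  refine Fintype.sum_congr _ _ fun p => Fintype.sum_congr _ _ fun e => ?_
  rw [decomposeFin_symm_eq_swap_mul]
  rfl

theorem sum_rename_swap_mul_X_zero_pow {c : MvPolynomial (Fin (m + 1)) R} (hc : c.IsSymmetric)
    (k : ℕ) : ∑ p, rename (swap 0 p) (c * X 0 ^ k) = c * psum (Fin (m + 1)) R k := by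
  simp [hc _, psum, Finset.mul_sum]

end FinSucc

section StabilizerInvariants

variable {R : Type*} [CommRing R] {m : ℕ}

theorem rename_succ_esymm_mem_adjoin (j : ℕ) :
    rename Fin.succ (esymm (Fin m) R j) ∈
      Algebra.adjoin (symmetricSubalgebra (Fin (m + 1)) R) {X 0} := by
  induction j with
  | zero => simp [one_mem]
  | succ j ih =>
    rw [eq_sub_of_add_eq (esymm_fin_succ (R := R) (m := m) j).symm]
    have he : esymm (Fin (m + 1)) R (j + 1) ∈
        Algebra.adjoin (symmetricSubalgebra (Fin (m + 1)) R) {X 0} :=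
      (Algebra.adjoin (symmetricSubalgebra (Fin (m + 1)) R) {X 0}).algebraMap_mem
        (⟨_, esymm_isSymmetric _ _ (j + 1)⟩ : symmetricSubalgebra (Fin (m + 1)) R)
    exact sub_mem he (mul_mem (Algebra.subset_adjoin rfl) ih)

theorem rename_succ_mem_adjoin_of_isSymmetric {q : MvPolynomial (Fin m) R}
    (hq : q.IsSymmetric) :
    rename Fin.succ q ∈ Algebra.adjoin (symmetricSubalgebra (Fin (m + 1)) R) {X 0} := by
  obtain ⟨w, hw⟩ := esymmAlgHom_fin_surjective (R := R) le_rfl ⟨q, hq⟩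
  set e : Fin m → MvPolynomial (Fin (m + 1)) R :=
    fun j => rename Fin.succ (esymm (Fin m) R (j + 1))
  have hq' : rename Fin.succ q = aeval e w := by
    have : q = aeval (fun j : Fin m => esymm (Fin m) R (j + 1)) w := by
      rw [← esymmAlgHom_apply, hw]
    rw [this, ← AlgHom.comp_apply, comp_aeval]
  have hmem : aeval e w ∈ Algebra.adjoin R (Set.range e) := by
    rw [Algebra.adjoin_range_eq_range_aeval]
    exact AlgHom.mem_range_self _ w
  rw [hq']
  exact Algebra.adjoin_le
    (S := (Algebra.adjoin (symmetricSubalgebra (Fin (m + 1)) R) {X 0}).restrictScalars R)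
    (Set.range_subset_iff.2 fun j => rename_succ_esymm_mem_adjoin _) hmem

theorem mem_adjoin_X_zero_of_forall_coeff_isSymmetric {h : MvPolynomial (Fin (m + 1)) R}
    (hh : ∀ k, ((finSuccEquiv R m h).coeff k).IsSymmetric) :
    h ∈ Algebra.adjoin (symmetricSubalgebra (Fin (m + 1)) R) {X 0} := by
  rw [← (finSuccEquiv R m).symm_apply_apply h, ← (finSuccEquiv R m h).sum_C_mul_X_pow_eq,
    Polynomial.sum, map_sum]
  refine Subalgebra.sum_mem _ fun k _ => ?_
  have hX : (finSuccEquiv R m).symm Polynomial.X = X 0 := by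
    rw [AlgEquiv.symm_apply_eq, finSuccEquiv_X_zero]
  rw [map_mul, map_pow, finSuccEquiv_symm_C, hX]
  exact mul_mem (rename_succ_mem_adjoin_of_isSymmetric (hh k))
    (pow_mem (Algebra.subset_adjoin (Set.mem_singleton _)) k)

end StabilizerInvariants

section PowerSums

variable {R : Type*} [CommRing R] [Nontrivial R]

theorem symmetrize_mul_X_zero_pow_mem_span {m : ℕ} (g : MvPolynomial (Fin (m + 1)) R) (d : ℕ) :
    symmetrize (g * X 0 ^ d) ∈ Submodule.span (symmetricSubalgebra (Fin (m + 1)) R)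
      (Set.range fun k : Fin (m + 1) => psum (Fin (m + 1)) R (d + k)) := by
  set H := ∑ e : Perm (Fin m), rename (decomposeFin.symm (0, e)) g
  have hH : H ∈ Algebra.adjoin (symmetricSubalgebra (Fin (m + 1)) R) {X 0} := by
    refine mem_adjoin_X_zero_of_forall_coeff_isSymmetric fun k => ?_
    simp only [H, map_sum, finSuccEquiv_rename_decomposeFin_symm, Polynomial.finsetSum_coeff,
      Polynomial.coeff_map, RingHom.coe_coe, ← symmetrize_apply]
    exact isSymmetric_symmetrize _
  obtain ⟨c, hc⟩ := exists_eq_sum_smul_X_pow_of_mem_adjoin hH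
  have hH_mul : ∑ e : Perm (Fin m), rename (decomposeFin.symm (0, e)) (g * X 0 ^ d) =
      H * X 0 ^ d := by
    simp [H, Finset.sum_mul, decomposeFin_symm_apply_zero]
  have hsum : symmetrize (g * X 0 ^ d) =
      ∑ k : Fin (m + 1), c k • psum (Fin (m + 1)) R (d + k) := by
    rw [symmetrize_eq_sum_rename_swap, hH_mul, hc, Fintype.card_fin, Finset.sum_range,
      Finset.sum_mul]
    simp only [map_sum]
    rw [Finset.sum_comm]
    refine Fintype.sum_congr _ _ fun k => ?_
    rw [Subalgebra.smul_def, Subalgebra.smul_def, smul_eq_mul, smul_eq_mul, mul_assoc, ← pow_add,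
      add_comm (k : ℕ) d, sum_rename_swap_mul_X_zero_pow (c k).2]
  rw [hsum]
  exact Submodule.sum_mem _ fun k _ => Submodule.smul_mem _ _ (Submodule.subset_span ⟨k, rfl⟩)

theorem symmetrize_mul_X_pow_mem_span {n : ℕ} (g : MvPolynomial (Fin n) R) (i : Fin n) (d : ℕ) :
    symmetrize (g * X i ^ d) ∈ Submodule.span (symmetricSubalgebra (Fin n) R)
      (Set.range fun k : Fin n => psum (Fin n) R (d + k)) := by
  obtain ⟨m, rfl⟩ : ∃ m, n = m + 1 := Nat.exists_eq_add_one_of_ne_zero i.pos.ne'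
  have h : g * X i ^ d = rename (swap 0 i) (rename (swap 0 i) g * X 0 ^ d) := by
    rw [map_mul, map_pow, rename_X, rename_rename, ← Perm.coe_mul, swap_mul_self, Perm.coe_one,
      rename_id_apply, swap_apply_left]
  rw [h, symmetrize_rename]
  exact symmetrize_mul_X_zero_pow_mem_span _ _

end PowerSums

end MvPolynomial

theorem symmetric_part_of_power_ideal_general
    (K : Type*) [Field K] [CharZero K] (n d : ℕ) :
    ∀ f : MvPolynomial (Fin n) K, f.IsSymmetric →
      (f ∈ Ideal.span (Set.range fun i : Fin n => (X i : MvPolynomial (Fin n) K) ^ d) ↔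
        ∃ c : Fin n → MvPolynomial (Fin n) K,
          (∀ k, (c k).IsSymmetric) ∧
          f = ∑ k : Fin n, c k * (∑ i : Fin n, (X i : MvPolynomial (Fin n) K) ^ (d + k.val))) := by
  intro f hf
  refine Iff.trans ?_ mem_span_symmetricSubalgebra_range_iff
  constructor
  · intro hmem
    obtain ⟨g, rfl⟩ := Ideal.mem_span_range_iff_exists_fun.1 hmem
    have hsym := Submodule.sum_mem _ (t := Finset.univ) fun i _ =>
      symmetrize_mul_X_pow_mem_span (g i) i d
    rw [← map_sum, symmetrize_of_isSymmetric hf, Fintype.card_fin] at hsym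
    have := Submodule.smul_of_tower_mem _ ((n.factorial : K)⁻¹) hsym
    rwa [← Nat.cast_smul_eq_nsmul K, smul_smul,
      inv_mul_cancel₀ (Nat.cast_ne_zero.2 n.factorial_ne_zero), one_smul] at this
  · intro hmem
    refine (Submodule.span_le (p := (Ideal.span _).restrictScalars
      (symmetricSubalgebra (Fin n) K))).2 (Set.range_subset_iff.2 fun k => ?_) hmem
    refine Ideal.sum_mem _ fun i _ => ?_
    rw [pow_add]
    exact Ideal.mul_mem_right _ _ (Ideal.subset_span ⟨i, rfl⟩)

/-- The ideal `(x₁^d,…,xₙ^d) ∩ K[x₁,…,xₙ]^{Sₙ}` of the ring of symmetric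
polynomials is generated by the power sums `p_d, p_{d+1}, …, p_{d+n-1}`:
a symmetric polynomial lies in `(x₁^d,…,xₙ^d)` iff it is a combination
`∑ₖ cₖ · p_{d+k}` with symmetric coefficients `cₖ`. -/
theorem symmetric_part_of_power_ideal
    (K : Type*) [Field K] [CharZero K] (n d : ℕ) (hn : 0 < n) (hd : 0 < d) :
    ∀ f : MvPolynomial (Fin n) K, f.IsSymmetric →
      (f ∈ Ideal.span (Set.range fun i : Fin n => (X i : MvPolynomial (Fin n) K) ^ d) ↔
        ∃ c : Fin n → MvPolynomial (Fin n) K,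
          (∀ k, (c k).IsSymmetric) ∧
          f = ∑ k : Fin n, c k * (∑ i : Fin n, (X i : MvPolynomial (Fin n) K) ^ (d + k.val))) :=
  symmetric_part_of_power_ideal_general K n d
end

section
/- Let K have characteristic zero, R = K[x₁,…,xₙ] with the Sₙ permutation action, and F = ⊕ᵢ R dxᵢ the free R-module of rank n on which Sₙ acts by σ(dxᵢ) = dx_{σ(i)} combined with the action on coefficients. Then the invariant submodule F^{Sₙ} is a free R^{Sₙ}-module of rank n generated by the elements Σᵢ xᵢ^k dxᵢ for k = 0, 1, …, n−1. -/
/-!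
Writing `c ↦ ∑ₖ cₖ ωₖ` as the Vandermonde matrix `V = (xᵢ^k)` acting on `c`, uniqueness holds
because `det V = ∏_{i<j} (xⱼ - xᵢ)` is nonzero. For an invariant `v`, Cramer's rule gives
`det V · cₖ = det (V with column k replaced by v)`. Substituting `xᵢ ↦ xⱼ` makes rows `i` and `j`
of that matrix equal (invariance under the transposition `(i j)` makes `vᵢ` and `vⱼ` agree
after the substitution), so it is divisible by each prime `xⱼ - xᵢ`, hence by `det V`.
Since `V` is `Sₙ`-equivariant, uniqueness forces the coefficients `cₖ` to be symmetric.
-/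

open MvPolynomial Matrix

namespace MvPolynomial

variable {σ R : Type*} [CommRing R] [DecidableEq σ]

theorem X_sub_X_dvd_sub_rename_update (i j : σ) (p : MvPolynomial σ R) :
    X j - X i ∣ p - rename (Function.update id i j) p := by
  let π := Ideal.Quotient.mkₐ R (Ideal.span {(X j - X i : MvPolynomial σ R)})
  have hπ : π.comp (rename (Function.update id i j)) = π := by
    refine algHom_ext fun l => ?_
    rcases eq_or_ne l i with rfl | hl
    · simp [π, Ideal.Quotient.mkₐ_eq_mk, Ideal.Quotient.eq]
    · simp [hl]
  rw [← Ideal.mem_span_singleton, ← Ideal.Quotient.eq, ← Ideal.Quotient.mkₐ_eq_mk R]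
  exact (DFunLike.congr_fun hπ p).symm

theorem rename_update_X_sub_X {i j : σ} (hij : i ≠ j) :
    rename (Function.update id i j) (X j - X i : MvPolynomial σ R) = 0 := by
  simp [hij.symm]

theorem X_sub_X_dvd_iff {i j : σ} (hij : i ≠ j) {p : MvPolynomial σ R} :
    X j - X i ∣ p ↔ rename (Function.update id i j) p = 0 :=
  ⟨fun ⟨q, hq⟩ => by rw [hq, map_mul, rename_update_X_sub_X hij, zero_mul],
    fun h => by simpa [h] using X_sub_X_dvd_sub_rename_update i j p⟩

theorem prime_X_sub_X [IsDomain R] {i j : σ} (hij : i ≠ j) :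
    Prime (X j - X i : MvPolynomial σ R) := by
  have hne : (X j - X i : MvPolynomial σ R) ≠ 0 := sub_ne_zero.mpr (X_injective.ne hij.symm)
  have hker : Ideal.span {X j - X i} = RingHom.ker (rename (R := R) (Function.update id i j)) := by
    ext p
    rw [Ideal.mem_span_singleton, RingHom.mem_ker, X_sub_X_dvd_iff hij]
  rw [← Ideal.span_singleton_prime hne, hker]
  exact RingHom.ker_isPrime _

theorem rename_update_eq_of_rename_swap_eq {i j : σ} {p q : MvPolynomial σ R}
    (h : rename (Equiv.swap i j) p = q) :
    rename (Function.update id i j) p = rename (Function.update id i j) q := by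
  have : Function.update id i j ∘ Equiv.swap i j = Function.update id i j := by
    funext l
    simp only [Function.comp_apply, Equiv.swap_apply_def, Function.update_apply, id]
    split_ifs <;> simp_all
  rw [← h, rename_rename, this]

end MvPolynomial

section Vandermonde

variable {R : Type*} [CommRing R] {n : ℕ}

theorem vandermonde_mulVec_eq_sum (v c : Fin n → R) :
    vandermonde v *ᵥ c = ∑ k, c k • fun i => v i ^ (k : ℕ) := by
  ext i
  simp [mulVec, dotProduct, vandermonde_apply, mul_comm]

theorem rename_vandermonde_X_mulVec (σ : Equiv.Perm (Fin n)) (c : Fin n → MvPolynomial (Fin n) R)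
    (j : Fin n) :
    rename σ ((vandermonde X *ᵥ c) (σ⁻¹ j)) = (vandermonde X *ᵥ fun k => rename σ (c k)) j := by
  simp [mulVec, dotProduct, vandermonde_apply]

variable [IsDomain R]

theorem det_vandermonde_X_ne_zero : (vandermonde (X : Fin n → MvPolynomial (Fin n) R)).det ≠ 0 :=
  det_vandermonde_ne_zero_iff.mpr X_injective

variable [UniqueFactorizationMonoid R]

theorem det_vandermonde_X_dvd {p : MvPolynomial (Fin n) R}
    (hp : ∀ i j, i < j → rename (Function.update id i j) p = 0) :
    (vandermonde X).det ∣ p := by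
  rw [det_vandermonde, Finset.prod_sigma']
  refine Finset.prod_dvd_of_isRelPrime ?_ fun ⟨i, j⟩ hij => ?_
  · rintro ⟨i, j⟩ hij ⟨k, l⟩ hkl hne
    simp only [Finset.coe_sigma, Set.mem_sigma_iff, Finset.coe_univ, Set.mem_univ,
      Finset.coe_Ioi, Set.mem_Ioi, true_and] at hij hkl
    refine (prime_X_sub_X hij.ne).irreducible.isRelPrime_iff_not_dvd.mpr ?_
    rw [X_sub_X_dvd_iff hij.ne]
    simp only [map_sub, rename_X, sub_eq_zero, X_inj, Function.update_apply, id]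
    split_ifs <;> grind
  · simp only [Finset.mem_sigma, Finset.mem_univ, Finset.mem_Ioi, true_and] at hij
    exact (X_sub_X_dvd_iff hij.ne).mpr (hp i j hij)

theorem det_vandermonde_X_dvd_cramer {v : Fin n → MvPolynomial (Fin n) R}
    (hv : ∀ i j, rename (Function.update id i j) (v i) = rename (Function.update id i j) (v j))
    (k : Fin n) : (vandermonde X).det ∣ cramer (vandermonde X) v k := by
  refine det_vandermonde_X_dvd fun i j hij => ?_
  rw [cramer_apply, AlgHom.map_det]
  refine det_zero_of_row_eq hij.ne (funext fun l => ?_)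
  simp only [AlgHom.mapMatrix_apply, map_apply, updateCol_apply, vandermonde_apply]
  split_ifs
  · exact hv i j
  · simp [hij.ne']

theorem exists_vandermonde_X_mulVec_eq {v : Fin n → MvPolynomial (Fin n) R}
    (hv : ∀ i j, rename (Function.update id i j) (v i) = rename (Function.update id i j) (v j)) :
    ∃ c, vandermonde X *ᵥ c = v := by
  choose c hc using det_vandermonde_X_dvd_cramer hv
  refine ⟨c, smul_right_injective _ (det_vandermonde_X_ne_zero (R := R) (n := n)) ?_⟩
  calc (vandermonde X).det • vandermonde X *ᵥ c
      = vandermonde X *ᵥ cramer (vandermonde X) v := by rw [← mulVec_smul, funext hc]; rfl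
    _ = (vandermonde X).det • v := mulVec_cramer _ _

end Vandermonde

theorem invariants_of_free_module_with_differentials_general
    (K : Type*) [Field K] (n : ℕ)
    (ω : Fin n → (Fin n → MvPolynomial (Fin n) K))
    (hω : ∀ k : Fin n, ω k = fun i => (X i : MvPolynomial (Fin n) K) ^ (k : ℕ)) :
    -- each generator `ωₖ` is invariant
    (∀ (k : Fin n) (σ : Equiv.Perm (Fin n)),
      (fun j => rename σ (ω k (σ⁻¹ j))) = ω k) ∧
    -- every invariant element is uniquely a combination with symmetric coefficients
    (∀ v : Fin n → MvPolynomial (Fin n) K,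
      (∀ σ : Equiv.Perm (Fin n), (fun j => rename σ (v (σ⁻¹ j))) = v) →
      ∃! c : Fin n → MvPolynomial (Fin n) K,
        (∀ k, (c k).IsSymmetric) ∧ v = ∑ k : Fin n, c k • ω k) := by
  simp only [hω, ← vandermonde_mulVec_eq_sum]
  refine ⟨fun k σ => funext fun j => by simp, fun v hv => ?_⟩
  have hinj := mulVec_injective_of_det_ne_zero (det_vandermonde_X_ne_zero (R := K) (n := n))
  obtain ⟨c, hc⟩ := exists_vandermonde_X_mulVec_eq fun i j =>
    rename_update_eq_of_rename_swap_eq (by simpa using congrFun (hv (Equiv.swap i j)) j)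
  refine ⟨c, ⟨fun k σ => ?_, hc.symm⟩, fun c' ⟨_, hc'⟩ => hinj (hc'.symm.trans hc.symm)⟩
  suffices vandermonde X *ᵥ (fun k => rename σ (c k)) = vandermonde X *ᵥ c from
    congrFun (hinj this) k
  funext j
  rw [← rename_vandermonde_X_mulVec, hc]
  exact congrFun (hv σ) j

/-- The invariant submodule `F^{Sₙ}` of the free module `F = ⊕ᵢ R·dxᵢ` (with
`σ(dxᵢ) = dx_{σ(i)}` combined with the action on coefficients, so that
`(σ·v)_j = σ(v_{σ⁻¹(j)})`) is a free `R^{Sₙ}`-module of rank `n` generated by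
`ωₖ = ∑ᵢ xᵢ^k dxᵢ`, `k = 0,…,n-1`: the generators are invariant and every
invariant element is uniquely a combination of them with symmetric
coefficients. -/
theorem invariants_of_free_module_with_differentials
    (K : Type*) [Field K] [CharZero K] (n : ℕ)
    (ω : Fin n → (Fin n → MvPolynomial (Fin n) K))
    (hω : ∀ k : Fin n, ω k = fun i => (X i : MvPolynomial (Fin n) K) ^ (k : ℕ)) :
    -- each generator `ωₖ` is invariant
    (∀ (k : Fin n) (σ : Equiv.Perm (Fin n)),
      (fun j => rename σ (ω k (σ⁻¹ j))) = ω k) ∧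
    -- every invariant element is uniquely a combination with symmetric coefficients
    (∀ v : Fin n → MvPolynomial (Fin n) K,
      (∀ σ : Equiv.Perm (Fin n), (fun j => rename σ (v (σ⁻¹ j))) = v) →
      ∃! c : Fin n → MvPolynomial (Fin n) K,
        (∀ k, (c k).IsSymmetric) ∧ v = ∑ k : Fin n, c k • ω k) :=
  invariants_of_free_module_with_differentials_general K n ω hω
end

section
/- Let K have characteristic zero, R = K[x₁,…,xₙ], and f₁,…,fₙ homogeneous polynomials satisfying fᵢ^σ = f_{σ(i)} for all σ ∈ Sₙ. Define g₁,…,gₙ by (g₁,…,gₙ)ᵗ = M (f₁,…,fₙ)ᵗ where M is the Vandermonde matrix with rows (x₁^k, x₂^k, …, xₙ^k) for k = 0,…,n−1, i.e., g_{k+1} = Σᵢ xᵢ^k fᵢ. Then (f₁,…,fₙ) is a complete intersection ideal (i.e., of finite colength) if and only if (g₁,…,gₙ) is a complete intersection ideal. -/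
/-!
Since `g = M f`, we have `(g) ⊆ (f)`. Conversely, modulo a prime `P ⊇ (g)` the images of the `fᵢ`
solve the Vandermonde system with nodes `x̄ᵢ`. If `x̄ᵢ = x̄ᵢ'`, the transposition `(i i')` acts
trivially modulo `P`, so `f̄ᵢ = f̄ᵢ'`; grouping equal nodes then gives a nondegenerate Vandermonde
system for the values `#(fibre) · f̄ᵢ`, and in characteristic zero all `f̄ᵢ` vanish. Hence `(f)`
and `(g)` have the same radical, and finite colength depends only on the radical: a monic relation
of `x` modulo `I ⊆ √J` becomes one modulo `J` after raising it to a power.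
-/

open MvPolynomial

section Radical

variable {R A : Type*} [CommRing R] [CommRing A] [Algebra R A]

theorem Ideal.isIntegral_mk_of_le_radical {I J : Ideal A} (hIJ : I ≤ J.radical) {x : A}
    (hx : IsIntegral R (Ideal.Quotient.mk I x)) : IsIntegral R (Ideal.Quotient.mk J x) := by
  obtain ⟨p, hp, hpx⟩ := hx
  have hpI : Polynomial.aeval x p ∈ I := by
    rw [← Ideal.Quotient.eq_zero_iff_mem, ← Ideal.Quotient.mkₐ_eq_mk R,
      ← Polynomial.aeval_algHom_apply]
    exact hpx
  obtain ⟨N, hN⟩ := hIJ hpI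
  refine ⟨p ^ N, hp.pow N, ?_⟩
  rw [← Polynomial.aeval_def, ← Ideal.Quotient.mkₐ_eq_mk R, Polynomial.aeval_algHom_apply,
    map_pow, Ideal.Quotient.mkₐ_eq_mk, Ideal.Quotient.eq_zero_iff_mem]
  exact hN

theorem Ideal.finite_quotient_of_le_radical [Algebra.FiniteType R A] {I J : Ideal A}
    (hIJ : I ≤ J.radical) [Module.Finite R (A ⧸ I)] : Module.Finite R (A ⧸ J) := by
  have : Algebra.IsIntegral R (A ⧸ J) := ⟨fun y => by
    obtain ⟨x, rfl⟩ := Ideal.Quotient.mk_surjective y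
    exact Ideal.isIntegral_mk_of_le_radical hIJ (Algebra.IsIntegral.isIntegral _)⟩
  exact Algebra.IsIntegral.finite

end Radical

section Vandermonde

open Finset

theorem Finset.eq_zero_of_forall_sum_mul_pow_eq_zero {R : Type*} [CommRing R] [IsDomain R]
    (s : Finset R) {v : R → R} (hv : ∀ k < #s, ∑ t ∈ s, v t * t ^ k = 0) :
    ∀ t ∈ s, v t = 0 := by
  set e := s.equivFin.symm
  have hzero : (fun j => v (e j)) = 0 := by
    refine Matrix.eq_zero_of_forall_pow_sum_mul_pow_eq_zero (f := fun j => (e j : R))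
      (Subtype.val_injective.comp e.injective) fun k => ?_
    rw [← hv k k.isLt, ← s.sum_coe_sort]
    exact e.sum_comp fun t => v t * (t : R) ^ (k : ℕ)
  intro t ht
  simpa using congrFun hzero (e.symm ⟨t, ht⟩)

theorem eq_zero_of_forall_sum_mul_pow_eq_zero_of_factorsThrough {ι R : Type*} [Fintype ι]
    [CommRing R] [IsDomain R] [CharZero R] {w c : ι → R} (hc : c.FactorsThrough w)
    (hw : ∀ k < Fintype.card ι, ∑ i, c i * w i ^ k = 0) (j : ι) : c j = 0 := by
  classical
  set c' := Function.extend w c 0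
  have hc' : ∀ i, c' (w i) = c i := hc.extend_apply 0
  have hsum : ∀ k < #(Finset.univ.image w), ∑ t ∈ Finset.univ.image w,
      (#{i | w i = t} • c' t) * t ^ k = 0 := fun k hk => by
    rw [← hw k (hk.trans_le Finset.card_image_le)]
    simp only [smul_mul_assoc, ← Finset.sum_comp (fun t => c' t * t ^ k), hc']
  have hj := Finset.eq_zero_of_forall_sum_mul_pow_eq_zero _ hsum (w j)
    (Finset.mem_image_of_mem w (Finset.mem_univ j))
  rw [hc', smul_eq_zero] at hj
  exact hj.resolve_left (Finset.card_ne_zero.mpr ⟨j, by simp⟩)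

end Vandermonde

theorem MvPolynomial.algHom_rename_eq_of_forall_X {σ R B : Type*} [CommRing R] [CommRing B]
    [Algebra R B] (φ : MvPolynomial σ R →ₐ[R] B) {e : σ → σ} (he : ∀ i, φ (X (e i)) = φ (X i))
    (p : MvPolynomial σ R) : φ (rename e p) = φ p := by
  rw [aeval_unique φ, aeval_rename]
  exact congrArg (fun g => aeval g p) (_root_.funext he)

theorem MvPolynomial.mem_of_forall_sum_X_pow_mul_mem {ι K : Type*} [Fintype ι] [Field K]
    [CharZero K] {f : ι → MvPolynomial ι K}
    (hequiv : ∀ (σ : Equiv.Perm ι) (i : ι), rename σ (f i) = f (σ i))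
    {P : Ideal (MvPolynomial ι K)} [P.IsPrime]
    (hP : ∀ k < Fintype.card ι, ∑ i, X i ^ k * f i ∈ P) (j : ι) : f j ∈ P := by
  classical
  set φ := Ideal.Quotient.mkₐ K P
  have : CharZero (MvPolynomial ι K ⧸ P) :=
    charZero_of_injective_algebraMap (algebraMap K _).injective
  have hsymm : (fun i => φ (f i)).FactorsThrough fun i => φ (X i) := fun i i' hii' => by
    have hswap : ∀ k, φ (X (Equiv.swap i i' k)) = φ (X k) := fun k => by
      rcases eq_or_ne k i with rfl | hki
      · simp [hii']
      rcases eq_or_ne k i' with rfl | hki'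
      · simp [hii']
      · rw [Equiv.swap_apply_of_ne_of_ne hki hki']
    show φ (f i) = φ (f i')
    rw [← algHom_rename_eq_of_forall_X φ hswap (f i), hequiv, Equiv.swap_apply_left]
  have hvand : ∀ k < Fintype.card ι, ∑ i, φ (f i) * φ (X i) ^ k = 0 := fun k hk => by
    simpa [φ, mul_comm] using Ideal.Quotient.eq_zero_iff_mem.mpr (hP k hk)
  simpa [φ, Ideal.Quotient.eq_zero_iff_mem] using
    eq_zero_of_forall_sum_mul_pow_eq_zero_of_factorsThrough hsymm hvand j

theorem vandermonde_transform_complete_intersection_general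
    (K : Type*) [Field K] [CharZero K] (n : ℕ)
    (f : Fin n → MvPolynomial (Fin n) K)
    (hequiv : ∀ (σ : Equiv.Perm (Fin n)) (i : Fin n), rename σ (f i) = f (σ i))
    (g : Fin n → MvPolynomial (Fin n) K)
    (hg : ∀ k : Fin n, g k = ∑ i : Fin n, (X i : MvPolynomial (Fin n) K) ^ (k : ℕ) * f i) :
    FiniteDimensional K (MvPolynomial (Fin n) K ⧸ Ideal.span (Set.range f)) ↔
      FiniteDimensional K (MvPolynomial (Fin n) K ⧸ Ideal.span (Set.range g)) := by
  have hgf : Ideal.span (Set.range g) ≤ Ideal.span (Set.range f) := by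
    rw [Ideal.span_le]
    rintro _ ⟨k, rfl⟩
    rw [hg k]
    exact Ideal.sum_mem _ fun i _ => Ideal.mul_mem_left _ _ (Ideal.subset_span ⟨i, rfl⟩)
  have hfg : Ideal.span (Set.range f) ≤ (Ideal.span (Set.range g)).radical := by
    rw [Ideal.span_le]
    rintro _ ⟨j, rfl⟩
    rw [SetLike.mem_coe, Ideal.radical_eq_sInf, Submodule.mem_sInf]
    rintro P ⟨hgP, hP⟩
    refine mem_of_forall_sum_X_pow_mul_mem hequiv (fun k hk => ?_) j
    rw [Fintype.card_fin] at hk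
    exact hg ⟨k, hk⟩ ▸ hgP (Ideal.subset_span ⟨⟨k, hk⟩, rfl⟩)
  exact ⟨fun _ => Ideal.finite_quotient_of_le_radical hfg,
    fun _ => Ideal.finite_quotient_of_le_radical (hgf.trans Ideal.le_radical)⟩

/-- Proposition 6.1: let `f₁,…,fₙ` be homogeneous polynomials with
`fᵢ^σ = f_{σ(i)}` for all `σ ∈ Sₙ`, and let `g_{k+1} = ∑ᵢ xᵢ^k fᵢ`
(`k = 0,…,n-1`, i.e. `(g) = M·(f)` for the Vandermonde matrix `M`). Then
`(f₁,…,fₙ)` is a complete intersection ideal (finite colength) iff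
`(g₁,…,gₙ)` is. -/
theorem vandermonde_transform_complete_intersection
    (K : Type*) [Field K] [CharZero K] (n : ℕ)
    (f : Fin n → MvPolynomial (Fin n) K)
    (hhom : ∀ i, ∃ d, (f i).IsHomogeneous d)
    (hequiv : ∀ (σ : Equiv.Perm (Fin n)) (i : Fin n), rename σ (f i) = f (σ i))
    (g : Fin n → MvPolynomial (Fin n) K)
    (hg : ∀ k : Fin n, g k = ∑ i : Fin n, (X i : MvPolynomial (Fin n) K) ^ (k : ℕ) * f i) :
    FiniteDimensional K (MvPolynomial (Fin n) K ⧸ Ideal.span (Set.range f)) ↔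
      FiniteDimensional K (MvPolynomial (Fin n) K ⧸ Ideal.span (Set.range g)) :=
  vandermonde_transform_complete_intersection_general K n f hequiv g hg
end

section
/- Let K have characteristic zero, n = n₁ + ⋯ + n_r, G = S_{n₁} × ⋯ × S_{n_r} a Young subgroup acting on R = K[x₁,…,xₙ] by block-wise permutation of the variables, and f₁,…,fₙ a homogeneous regular sequence satisfying fᵢ^σ = f_{σ(i)} for all σ ∈ G. Define g₁,…,gₙ via the block-diagonal matrix diag(V₁,…,V_r) applied to (f₁,…,fₙ)ᵗ, where Vᵢ is the Vandermonde matrix in the variables of the i-th block (rows are k-th powers of those variables for k = 0,…,nᵢ−1). Then (g₁,…,gₙ) = (f₁,…,fₙ) ∩ R^G as ideals of R^G. -/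
/-!
Write `p = ∑ h_s f_s`. Averaging over `G` (possible in characteristic zero) makes `s ↦ h_s`
`G`-equivariant, so `h_s` is invariant under the stabiliser of `x_s` in `G`. That stabiliser is
again a Young subgroup, so by the fundamental theorem of symmetric polynomials, applied block by
block, its invariants are generated by `x_s` and elementary symmetric polynomials of blocks; the
blocks of the stabiliser differ from those of `G` only by splitting off `x_s`, so these
invariants form the ring `R^G[x_s]`. As `x_s` is a root of `∏_{t ∼ s} (T - x_t) ∈ R^G[T]`, this
ring is spanned over `R^G` by `1, x_s, …, x_s^(n-1)`, `n` the size of the block of `s`.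
Transporting along transpositions gives `h_{(i,j)} = ∑_k b_{i,k} x_{i,j}^k` with invariant
`b_{i,k}` not depending on `j`, and then `∑_j h_{(i,j)} f_{(i,j)} = ∑_k b_{i,k} g_{(i,k)}`.
-/

open MvPolynomial
open Equiv (Perm)
open Finset

namespace Multiset

section CommSemiring

variable {S : Type*} [CommSemiring S]

theorem esymm_zero_right (s : Multiset S) : s.esymm 0 = 1 := by
  simp [esymm, powersetCard_zero_left]

theorem esymm_cons_succ_s14 (x : S) (s : Multiset S) (k : ℕ) :
    (x ::ₘ s).esymm (k + 1) = s.esymm (k + 1) + x * s.esymm k := by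
  simp [esymm, powersetCard_cons, map_map, prod_cons, sum_map_mul_left]

theorem esymm_mem_of_forall_mem {T : Type*} [SetLike T S] [SubsemiringClass T S] (t : T)
    {s : Multiset S} (hs : ∀ x ∈ s, x ∈ t) (k : ℕ) : s.esymm k ∈ t :=
  multiset_sum_mem _ fun _ hy => by
    obtain ⟨u, hu, rfl⟩ := mem_map.1 hy
    exact multiset_prod_mem _ fun z hz => hs z (mem_of_le (mem_powersetCard.1 hu).1 hz)

end CommSemiring

variable {S : Type*} [CommRing S]

theorem esymm_mem_of_esymm_cons_mem {T : Type*} [SetLike T S] [SubringClass T S] (t : T)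
    {x : S} {s : Multiset S} (hx : x ∈ t) (hs : ∀ k, (x ::ₘ s).esymm k ∈ t) (k : ℕ) :
    s.esymm k ∈ t := by
  induction k with
  | zero => rw [esymm_zero_right]; exact one_mem t
  | succ k ih =>
    rw [← add_sub_cancel_right (s.esymm (k + 1)) (x * s.esymm k), ← esymm_cons_succ_s14]
    exact sub_mem (hs _) (mul_mem hx ih)

theorem pow_card_eq_neg_sum_esymm {s : Multiset S} {x : S} (hx : x ∈ s) :
    x ^ card s = -∑ j ∈ Finset.range (card s),
      (-1) ^ (j + 1) * (s.esymm (j + 1) * x ^ (card s - (j + 1))) := by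
  have h := congrArg (Polynomial.eval x) (prod_X_sub_X_eq_sum_esymm s)
  rw [Polynomial.eval_multiset_prod, map_map, prod_eq_zero (mem_map.2 ⟨x, hx, by simp⟩),
    Finset.sum_range_succ', Polynomial.eval_add, Polynomial.eval_finsetSum] at h
  simp only [Polynomial.eval_mul, Polynomial.eval_pow, Polynomial.eval_neg, Polynomial.eval_one,
    Polynomial.eval_C, Polynomial.eval_X, esymm_zero_right, pow_zero, one_mul, Nat.sub_zero] at h
  linear_combination -h

end Multiset

theorem Algebra.adjoin_singleton_le_span_pow {A S : Type*} [CommSemiring A] [Semiring S]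
    [Algebra A S] {x : S} {n : ℕ} (hn : 0 < n)
    (hx : x ^ n ∈ Submodule.span A (Set.range fun k : Fin n => x ^ (k : ℕ))) :
    Subalgebra.toSubmodule (Algebra.adjoin A {x}) ≤
      Submodule.span A (Set.range fun k : Fin n => x ^ (k : ℕ)) := by
  set M := Submodule.span A (Set.range fun k : Fin n => x ^ (k : ℕ))
  have hmul : ∀ y ∈ M, x * y ∈ M := fun y hy => by
    induction hy using Submodule.span_induction with
    | mem _ h =>
      obtain ⟨k, rfl⟩ := h
      rw [← pow_succ']
      rcases (Nat.succ_le_of_lt k.2).lt_or_eq with hk | hk : k.1 + 1 < n ∨ k.1 + 1 = n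
      · exact Submodule.subset_span ⟨⟨k + 1, hk⟩, rfl⟩
      · rwa [hk]
    | zero => simp
    | add _ _ _ _ h₁ h₂ => rw [mul_add]; exact add_mem h₁ h₂
    | smul a _ _ h => rw [mul_smul_comm]; exact M.smul_mem a h
  have hpow : ∀ m, x ^ m ∈ M := fun m => by
    induction m with
    | zero => exact Submodule.subset_span ⟨⟨0, hn⟩, rfl⟩
    | succ m ih => rw [pow_succ']; exact hmul _ ih
  rw [Algebra.adjoin_eq_span, Submodule.span_le]
  rintro _ hy
  obtain ⟨m, rfl⟩ := Submonoid.mem_closure_singleton.1 hy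
  exact hpow m

theorem Equiv.Perm.exists_sigmaCongrRight_eq {ι : Type*} {β : ι → Type*} (e : Perm (Σ i, β i))
    (he : ∀ s, (e s).1 = s.1) : ∃ τ : ∀ i, Perm (β i), Equiv.sigmaCongrRight τ = e := by
  refine ⟨fun i => (sigmaSubtype i).permCongr (e.subtypePerm fun s => by rw [he]), ?_⟩
  have key (i : ι) (x : Σ i, β i) (h : x.1 = i) : (⟨i, sigmaSubtype i ⟨x, h⟩⟩ : Σ i, β i) = x := by
    obtain ⟨_, b⟩ := x; cases h; rfl
  ext ⟨i, j⟩ : 1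
  exact key i _ _

theorem Finset.card_filter_sigma_fst_eq {ι : Type*} [Fintype ι] [DecidableEq ι] {β : ι → Type*}
    [∀ i, Fintype (β i)] (i : ι) :
    #(univ.filter fun s : Σ i, β i => s.1 = i) = Fintype.card (β i) := by
  rw [← Fintype.card_subtype, Fintype.card_congr (Equiv.sigmaSubtype i)]

namespace MvPolynomial

variable {R σ ι : Type*} [CommRing R]

def youngSubgroup (π : σ → ι) : Subgroup (Perm σ) where
  carrier := {e | ∀ s, π (e s) = π s}
  one_mem' _ := rfl
  mul_mem' he hf s := (he _).trans (hf s)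
  inv_mem' {e} he s := by simpa using (he (e⁻¹ s)).symm

variable (R) in
def invariantSubalgebra (H : Subgroup (Perm σ)) : Subalgebra R (MvPolynomial σ R) where
  carrier := {p | ∀ e ∈ H, rename e p = p}
  mul_mem' ha hb e he := by rw [map_mul, ha e he, hb e he]
  add_mem' ha hb e he := by rw [map_add, ha e he, hb e he]
  algebraMap_mem' c e _ := by simp [algebraMap_eq]

theorem invariantSubalgebra_anti {H H' : Subgroup (Perm σ)} (h : H ≤ H') :
    invariantSubalgebra R H' ≤ invariantSubalgebra R H :=
  fun _ hq e he => hq e (h he)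

theorem swap_mem_youngSubgroup [DecidableEq σ] {π : σ → ι} {a b : σ} (h : π a = π b) :
    Equiv.swap a b ∈ youngSubgroup π := fun s => by
  rcases eq_or_ne s a with rfl | hsa
  · simp [h]
  rcases eq_or_ne s b with rfl | hsb
  · simp [h]
  · rw [Equiv.swap_apply_of_ne_of_ne hsa hsb]

theorem youngSubgroup_ite_le_inf_stabilizer [DecidableEq σ] (π : σ → ι) (a : σ) :
    youngSubgroup (fun s => if s = a then none else some (π s)) ≤
      youngSubgroup π ⊓ MulAction.stabilizer (Perm σ) a := fun e he => by
  have hea : e a = a := by simpa using he a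
  refine ⟨fun s => ?_, hea⟩
  rcases eq_or_ne s a with rfl | hsa
  · rw [hea]
  · have hesa : e s ≠ a := fun h => hsa (e.injective (h.trans hea.symm))
    simpa [hsa, hesa] using he s

theorem subtypeCongr_mem_youngSubgroup [DecidableEq ι] (π : σ → ι) (i : ι)
    (ea : Perm {s // π s = i}) (eb : Perm {s // π s ≠ i}) (heb : ∀ b, π (eb b) = π b) :
    ea.subtypeCongr eb ∈ youngSubgroup π := by
  intro s
  by_cases h : π s = i
  · simp [h, (ea ⟨s, h⟩).2]
  · simp [h, heb]

section SumAlgEquiv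

variable {α β : Type*}

theorem sumAlgEquiv_rename_inl (p : MvPolynomial α R) :
    sumAlgEquiv R α β (rename Sum.inl p) = map C p :=
  DFunLike.congr_fun (sumAlgEquiv_comp_rename_inl R α β) p

theorem sumAlgEquiv_rename_inr (p : MvPolynomial β R) :
    sumAlgEquiv R α β (rename Sum.inr p) = C p :=
  DFunLike.congr_fun (sumAlgEquiv_comp_rename_inr R α β) p

theorem rename_sumAlgEquiv (e : α → α) (p : MvPolynomial (α ⊕ β) R) :
    rename e (sumAlgEquiv R α β p) = sumAlgEquiv R α β (rename (Sum.map e id) p) := by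
  have : ((rename (R := MvPolynomial β R) e).restrictScalars R).comp
      (sumAlgEquiv R α β).toAlgHom = (sumAlgEquiv R α β).toAlgHom.comp (rename (Sum.map e id)) := by
    ext (a | b) <;> simp
  exact DFunLike.congr_fun this p

theorem map_rename_sumAlgEquiv (e : β → β) (p : MvPolynomial (α ⊕ β) R) :
    map (rename e).toRingHom (sumAlgEquiv R α β p) =
      sumAlgEquiv R α β (rename (Sum.map id e) p) := by
  have : (mapAlgHom (R := R) (σ := α) (rename e)).comp (sumAlgEquiv R α β).toAlgHom =
      (sumAlgEquiv R α β).toAlgHom.comp (rename (Sum.map id e)) := by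
    ext (a | b) <;> simp [mapAlgHom_apply]
  exact DFunLike.congr_fun this p

theorem map_aeval_esymm [Fintype α] {S : Type*} [CommRing S] (φ : S →+* S) {n : ℕ}
    (Q : MvPolynomial (Fin n) S) :
    map φ (aeval (fun i : Fin n => esymm α S (i + 1)) Q) =
      aeval (fun i : Fin n => esymm α S (i + 1)) (map φ Q) := by
  induction Q using MvPolynomial.induction_on with
  | C c => simp [algebraMap_eq]
  | add p q hp hq => simp only [map_add, hp, hq]
  | mul_X p i hp => simp only [map_mul, hp, map_X, aeval_X, map_esymm]

/-- The coefficients of `q` as a symmetric polynomial in the `α`-variables are unique, hence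
`H`-invariant whenever `q` is. -/
theorem mem_adjoin_of_sumCongr_invariant [Fintype α] (H : Subgroup (Perm β))
    (q : MvPolynomial (α ⊕ β) R)
    (hα : ∀ e : Perm α, rename (Perm.sumCongr e 1) q = q)
    (hβ : ∀ e ∈ H, rename (Perm.sumCongr 1 e) q = q) :
    q ∈ Algebra.adjoin R (Set.range (fun k => rename Sum.inl (esymm α R k)) ∪
      rename Sum.inr '' (invariantSubalgebra R H : Set (MvPolynomial β R))) := by
  set Φ := sumAlgEquiv R α β
  have hsymm : (Φ q).IsSymmetric := fun e => by
    rw [rename_sumAlgEquiv]; exact congrArg Φ (hα e)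
  obtain ⟨Q, hQ⟩ := esymmAlgHom_surjective (MvPolynomial β R) le_rfl ⟨Φ q, hsymm⟩
  replace hQ : aeval (fun i : Fin _ => esymm α _ (i + 1)) Q = Φ q := by
    rw [← esymmAlgHom_apply, hQ]
  have hQinv : ∀ e ∈ H, map (rename e).toRingHom Q = Q := fun e he =>
    esymmAlgHom_injective (σ := α) (MvPolynomial β R) le_rfl <| Subtype.ext <| by
      rw [esymmAlgHom_apply, esymmAlgHom_apply, ← map_aeval_esymm, hQ, map_rename_sumAlgEquiv]
      exact congrArg Φ (hβ e he)
  obtain ⟨Q', rfl⟩ : Q ∈ Set.range (map (invariantSubalgebra R H).val.toRingHom) := by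
    rw [mem_range_map_iff_coeffs_subset]
    intro c hc
    obtain ⟨m, -, rfl⟩ := mem_coeffs_iff.1 hc
    refine ⟨⟨_, fun e he => ?_⟩, rfl⟩
    exact (coeff_map _ _ _).symm.trans (congrArg (coeff m) (hQinv e he))
  rw [← Φ.symm_apply_apply q, ← hQ]
  clear hQ hQinv hsymm
  induction Q' using MvPolynomial.induction_on with
  | C c =>
    rw [map_C, aeval_C, algebraMap_eq, Φ.symm_apply_eq.2 (sumAlgEquiv_rename_inr _).symm]
    exact Algebra.subset_adjoin (Or.inr ⟨c, c.2, rfl⟩)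
  | add p q hp hq => rw [map_add, map_add, map_add]; exact add_mem hp hq
  | mul_X p i hp =>
    rw [map_mul, map_mul, map_mul]
    refine mul_mem hp (Algebra.subset_adjoin (Or.inl ⟨i + 1, ?_⟩))
    rw [map_X, aeval_X, ← map_esymm (σ := α) (f := C),
      Φ.symm_apply_eq.2 (sumAlgEquiv_rename_inl _).symm]

end SumAlgEquiv

theorem rename_multiset_esymm {τ : Type*} (f : τ → σ) (m : Multiset τ) (k : ℕ) :
    rename (R := R) f ((m.map X).esymm k) = ((m.map f).map X).esymm k := by
  simp [Multiset.esymm, map_multiset_sum, map_multiset_prod, Multiset.powersetCard_map,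
    Multiset.map_map]

theorem rename_subtype_val_esymm [Fintype σ] (p : σ → Prop) [DecidablePred p] (k : ℕ) :
    rename (Subtype.val : {s // p s} → σ) (esymm {s // p s} R k) =
      ((univ.filter p).val.map X).esymm k := by
  rw [esymm_eq_multiset_esymm, rename_multiset_esymm, univ_val_map_subtype_val]

theorem rename_sumCongr_rename_sumCompl_symm {p : σ → Prop} [DecidablePred p]
    (ea : Perm {s // p s}) (eb : Perm {s // ¬p s}) (q : MvPolynomial σ R) :
    rename (Perm.sumCongr ea eb) (rename (Equiv.sumCompl p).symm q) =
      rename (Equiv.sumCompl p).symm (rename (ea.subtypeCongr eb) q) := by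
  simp only [rename_rename]
  congr 1
  ext s
  simp [Perm.subtypeCongr]

section Young

variable [Fintype σ] [DecidableEq ι]

variable (R) in
noncomputable def blockEsymm (π : σ → ι) (i : ι) (k : ℕ) : MvPolynomial σ R :=
  ((univ.filter fun s => π s = i).val.map X).esymm k

theorem blockEsymm_mem_invariantSubalgebra (π : σ → ι) (i : ι) (k : ℕ) :
    blockEsymm R π i k ∈ invariantSubalgebra R (youngSubgroup π) := fun e he => by
  simp only [blockEsymm]
  rw [rename_multiset_esymm, ← Equiv.coe_toEmbedding, ← Finset.map_val]
  congr 3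
  ext s
  simp only [Finset.mem_map_equiv, Finset.mem_filter, Finset.mem_univ, true_and]
  rw [← he (e.symm s), Equiv.apply_symm_apply]

theorem rename_subtype_val_blockEsymm (π : σ → ι) (i₀ : ι) (i : {i // i ≠ i₀}) (k : ℕ) :
    rename Subtype.val
        (blockEsymm R (fun b : {s // π s ≠ i₀} => (⟨π b, b.2⟩ : {i // i ≠ i₀})) i k) =
      blockEsymm R π i k := by
  have hfiber : (univ.filter fun b : {s // π s ≠ i₀} => (⟨π b, b.2⟩ : {i // i ≠ i₀}) = i).val.map
      Subtype.val = (univ.filter (π · = i)).val :=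
    (Finset.map_val (Function.Embedding.subtype _) _).symm.trans <| congrArg _ <| by
      ext s; simpa [Subtype.ext_iff] using fun h => h ▸ i.2
  simp only [blockEsymm]
  rw [rename_multiset_esymm, hfiber]

theorem invariantSubalgebra_youngSubgroup_le_adjoin (π : σ → ι) :
    invariantSubalgebra R (youngSubgroup π) ≤
      Algebra.adjoin R (Set.range fun ik : ι × ℕ => blockEsymm R π ik.1 ik.2) := by
  intro q hq
  induction h : Fintype.card σ using Nat.strong_induction_on generalizing σ ι with
  | _ n ih =>
  rcases isEmpty_or_nonempty σ with hσ | ⟨⟨s₀⟩⟩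
  · obtain ⟨c, rfl⟩ := C_surjective σ q
    exact Subalgebra.algebraMap_mem _ c
  set i₀ := π s₀
  set E := Equiv.sumCompl (fun s => π s = i₀)
  let π' : {s // π s ≠ i₀} → {i // i ≠ i₀} := fun b => ⟨π b, b.2⟩
  have hcard : Fintype.card {s // π s ≠ i₀} < n :=
    h ▸ Fintype.card_subtype_lt (p := fun s => π s ≠ i₀) (x := s₀) (not_not.2 rfl)
  have hq' := mem_adjoin_of_sumCongr_invariant (youngSubgroup π') (rename E.symm q)
    (fun ea => by
      rw [rename_sumCongr_rename_sumCompl_symm,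
        hq _ (subtypeCongr_mem_youngSubgroup π i₀ ea 1 fun _ => rfl)])
    (fun eb heb => by
      rw [rename_sumCongr_rename_sumCompl_symm,
        hq _ (subtypeCongr_mem_youngSubgroup π i₀ 1 eb fun b => congrArg Subtype.val (heb b))])
  have hq'' : rename E (rename E.symm q) ∈ Subalgebra.map (rename E) _ :=
    Subalgebra.mem_map.2 ⟨_, hq', rfl⟩
  rw [rename_rename, E.self_comp_symm, rename_id_apply, AlgHom.map_adjoin] at hq''
  refine Algebra.adjoin_le ?_ hq''
  rintro _ ⟨x, (⟨k, rfl⟩ | ⟨c, hc, rfl⟩), rfl⟩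
  · rw [rename_rename, show E ∘ Sum.inl = Subtype.val from rfl, rename_subtype_val_esymm]
    exact Algebra.subset_adjoin ⟨(i₀, k), rfl⟩
  · have hc' : rename Subtype.val c ∈ Subalgebra.map (rename Subtype.val) _ :=
      Subalgebra.mem_map.2 ⟨_, ih _ hcard π' hc rfl, rfl⟩
    rw [AlgHom.map_adjoin] at hc'
    rw [rename_rename, show E ∘ Sum.inr = Subtype.val from rfl]
    refine Algebra.adjoin_mono ?_ hc'
    rintro _ ⟨_, ⟨⟨i, k⟩, rfl⟩, rfl⟩
    exact ⟨(i, k), (rename_subtype_val_blockEsymm π i₀ i k).symm⟩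

theorem X_pow_card_mem_span_X_pow (π : σ → ι) (a : σ) :
    X a ^ #(univ.filter (π · = π a)) ∈ Submodule.span (invariantSubalgebra R (youngSubgroup π))
      (Set.range fun k : Fin #(univ.filter (π · = π a)) => (X a : MvPolynomial σ R) ^ (k : ℕ)) := by
  set B := univ.filter (π · = π a)
  have hcard : Multiset.card (B.val.map (X : σ → MvPolynomial σ R)) = #B := by
    rw [Multiset.card_map]; rfl
  have hx := Multiset.pow_card_eq_neg_sum_esymm (Multiset.mem_map_of_mem (X (R := R))
    (show a ∈ B.val from Finset.mem_filter.2 ⟨mem_univ a, rfl⟩))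
  rw [hcard] at hx
  rw [hx]
  refine neg_mem (sum_mem fun j hj => ?_)
  have hj : #B - (j + 1) < #B := by rw [Finset.mem_range] at hj; omega
  have he : (-1) ^ (j + 1) * (B.val.map X).esymm (j + 1) ∈
      invariantSubalgebra R (youngSubgroup π) :=
    mul_mem (pow_mem (neg_mem (one_mem _)) _) (blockEsymm_mem_invariantSubalgebra π (π a) (j + 1))
  rw [← mul_assoc]
  exact Submodule.smul_mem (Submodule.span _ _) (⟨_, he⟩ : invariantSubalgebra R _)
    (Submodule.subset_span ⟨⟨_, hj⟩, rfl⟩)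

variable [DecidableEq σ]

theorem mem_span_X_pow_of_mem_invariantSubalgebra_inf_stabilizer (π : σ → ι) (a : σ)
    {q : MvPolynomial σ R}
    (hq : q ∈ invariantSubalgebra R (youngSubgroup π ⊓ MulAction.stabilizer (Perm σ) a)) :
    q ∈ Submodule.span (invariantSubalgebra R (youngSubgroup π))
      (Set.range fun k : Fin #(univ.filter (π · = π a)) => (X a : MvPolynomial σ R) ^ (k : ℕ)) := by
  set A := invariantSubalgebra R (youngSubgroup π)
  set π' : σ → Option ι := fun s => if s = a then none else some (π s)
  have hfiber_none : univ.filter (π' · = none) = {a} := by ext s; by_cases s = a <;> simp [π', *]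
  have hfiber_some (i : ι) : univ.filter (π' · = some i) = (univ.filter (π · = i)).erase a := by
    ext s; by_cases s = a <;> simp [π', *]
  have hA (i : ι) (k : ℕ) : blockEsymm R π i k ∈ Algebra.adjoin A {(X a : MvPolynomial σ R)} :=
    Subalgebra.algebraMap_mem _ (⟨_, blockEsymm_mem_invariantSubalgebra π i k⟩ : A)
  have hgen : Algebra.adjoin R (Set.range fun ik : Option ι × ℕ => blockEsymm R π' ik.1 ik.2) ≤
      (Algebra.adjoin A {X a}).restrictScalars R := by
    refine Algebra.adjoin_le ?_
    rintro _ ⟨⟨_ | i, k⟩, rfl⟩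
    · simp only [blockEsymm, hfiber_none]
      refine Multiset.esymm_mem_of_forall_mem ((Algebra.adjoin A {X a}).restrictScalars R)
        (fun y hy => ?_) k
      obtain rfl : y = X a := by simpa using hy
      exact Algebra.self_mem_adjoin_singleton A _
    by_cases hi : π a = i
    · subst hi
      have hcons : X a ::ₘ ((univ.filter (π · = π a)).erase a).val.map X =
          (univ.filter (π · = π a)).val.map (X : σ → MvPolynomial σ R) := by
        rw [Finset.erase_val, ← Multiset.map_cons, Multiset.cons_erase (by simp)]
      simp only [blockEsymm, hfiber_some]
      exact Multiset.esymm_mem_of_esymm_cons_mem ((Algebra.adjoin A {X a}).restrictScalars R)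
        (Algebra.self_mem_adjoin_singleton A _) (fun k => by rw [hcons]; exact hA _ k) k
    · have : (univ.filter (π · = i)).erase a = univ.filter (π · = i) :=
        Finset.erase_eq_of_notMem (by simpa using hi)
      simp only [blockEsymm, hfiber_some, this]
      exact hA i k
  have hpos : 0 < #(univ.filter (π · = π a)) := Finset.card_pos.2 ⟨a, by simp⟩
  exact Algebra.adjoin_singleton_le_span_pow hpos (X_pow_card_mem_span_X_pow π a)
    (hgen (invariantSubalgebra_youngSubgroup_le_adjoin π'
      (invariantSubalgebra_anti (youngSubgroup_ite_le_inf_stabilizer π a) hq)))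

theorem exists_forall_eq_sum_mul_X_pow_of_equivariant (π : σ → ι)
    (h : σ → MvPolynomial σ R) (hh : ∀ e ∈ youngSubgroup π, ∀ s, rename e (h s) = h (e s))
    (i : ι) {n : ℕ} (hn : #(univ.filter (π · = i)) = n) :
    ∃ b : Fin n → MvPolynomial σ R, (∀ k, b k ∈ invariantSubalgebra R (youngSubgroup π)) ∧
      ∀ s, π s = i → h s = ∑ k, b k * X s ^ (k : ℕ) := by
  by_cases hi : ∃ a, π a = i
  swap
  · exact ⟨0, fun _ => zero_mem _, fun s hs => (hi ⟨s, hs⟩).elim⟩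
  obtain ⟨a, rfl⟩ := hi
  subst hn
  have hstab : h a ∈ invariantSubalgebra R (youngSubgroup π ⊓ MulAction.stabilizer (Perm σ) a) :=
    fun e ⟨he, hea⟩ => (hh e he a).trans (congrArg h hea)
  obtain ⟨c, hc⟩ := (Submodule.mem_span_range_iff_exists_fun _).1
    (mem_span_X_pow_of_mem_invariantSubalgebra_inf_stabilizer π a hstab)
  refine ⟨fun k => c k, fun k => (c k).2, fun s hs => ?_⟩
  have hswap := swap_mem_youngSubgroup (π := π) hs.symm
  rw [← Equiv.swap_apply_left a s, ← hh _ hswap, ← hc, map_sum]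
  refine sum_congr rfl fun k _ => ?_
  rw [Subalgebra.smul_def, smul_eq_mul, map_mul, map_pow, rename_X, (c k).2 _ hswap]

end Young

theorem exists_equivariant_of_mem_span {G ι : Type*} [Group G] [Fintype G]
    [Invertible (Fintype.card G : R)] [Fintype ι] (ρ : G →* Perm σ) (ψ : G →* Perm ι)
    (f : ι → MvPolynomial σ R) (hf : ∀ g i, rename (ρ g) (f i) = f (ψ g i))
    {p : MvPolynomial σ R} (hp : ∀ g, rename (ρ g) p = p) (hmem : p ∈ Ideal.span (Set.range f)) :
    ∃ h : ι → MvPolynomial σ R,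
      (∀ g i, rename (ρ g) (h i) = h (ψ g i)) ∧ p = ∑ i, h i * f i := by
  obtain ⟨h, hsum⟩ := Ideal.mem_span_range_iff_exists_fun.1 hmem
  refine ⟨fun i => ⅟(Fintype.card G : R) • ∑ g, rename (ρ g) (h (ψ g⁻¹ i)), fun g₀ i => ?_, ?_⟩
  · rw [map_smul, map_sum]
    congr 1
    refine Fintype.sum_equiv (Equiv.mulLeft g₀) _ _ fun g => ?_
    rw [Equiv.coe_mulLeft, rename_rename, ← Perm.coe_mul, ← map_mul, mul_inv_rev, map_mul ψ,
      Perm.mul_apply, map_inv ψ g₀, Perm.inv_def, Equiv.symm_apply_apply]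
  · have hterm (g : G) : ∑ i, rename (ρ g) (h (ψ g⁻¹ i)) * f i = p := by
      rw [← hp g, ← hsum, map_sum]
      refine (Fintype.sum_equiv (ψ g) _ _ fun i => ?_).symm
      rw [map_mul, hf, map_inv, Perm.inv_def, Equiv.symm_apply_apply]
    simp_rw [smul_mul_assoc, sum_mul, ← smul_sum]
    rw [sum_comm]
    simp_rw [hterm, sum_const, card_univ, ← Nat.cast_smul_eq_nsmul R, smul_smul, invOf_mul_self,
      one_smul]

end MvPolynomial

theorem block_vandermonde_generators_of_invariant_ideal_general
    (K : Type*) [Field K] [CharZero K] (r : ℕ) (nb : Fin r → ℕ)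
    (f : (Σ i : Fin r, Fin (nb i)) → MvPolynomial (Σ i : Fin r, Fin (nb i)) K)
    (hequiv : ∀ (τ : ∀ i, Equiv.Perm (Fin (nb i))) (idx : Σ i : Fin r, Fin (nb i)),
      rename (Equiv.sigmaCongrRight τ) (f idx) = f (Equiv.sigmaCongrRight τ idx))
    (g : (Σ i : Fin r, Fin (nb i)) → MvPolynomial (Σ i : Fin r, Fin (nb i)) K)
    (hg : ∀ i : Fin r, ∀ k : Fin (nb i), g ⟨i, k⟩
      = ∑ j : Fin (nb i), (X (⟨i, j⟩ : Σ i : Fin r, Fin (nb i)) :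
          MvPolynomial (Σ i : Fin r, Fin (nb i)) K) ^ (k : ℕ) * f ⟨i, j⟩) :
    ∀ p : MvPolynomial (Σ i : Fin r, Fin (nb i)) K,
      (∀ τ : ∀ i, Equiv.Perm (Fin (nb i)), rename (Equiv.sigmaCongrRight τ) p = p) →
      (p ∈ Ideal.span (Set.range f) ↔
        ∃ c : (Σ i : Fin r, Fin (nb i)) → MvPolynomial (Σ i : Fin r, Fin (nb i)) K,
          (∀ idx, ∀ τ : ∀ i, Equiv.Perm (Fin (nb i)),
            rename (Equiv.sigmaCongrRight τ) (c idx) = c idx) ∧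
          p = ∑ idx : Σ i : Fin r, Fin (nb i), c idx * g idx) := by
  intro p hp
  constructor
  · intro hmem
    have : Invertible (Fintype.card (∀ i, Perm (Fin (nb i))) : K) :=
      invertibleOfNonzero (Nat.cast_ne_zero.2 Fintype.card_ne_zero)
    obtain ⟨h, hh, rfl⟩ := exists_equivariant_of_mem_span (Perm.sigmaCongrRightHom _)
      (Perm.sigmaCongrRightHom _) f hequiv hp hmem
    have hhY : ∀ e ∈ youngSubgroup Sigma.fst, ∀ s, rename e (h s) = h (e s) := fun e he => by
      obtain ⟨τ, rfl⟩ := Perm.exists_sigmaCongrRight_eq e he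
      exact hh τ
    choose b hb hbh using fun i => exists_forall_eq_sum_mul_X_pow_of_equivariant Sigma.fst h hhY i
      ((card_filter_sigma_fst_eq i).trans (Fintype.card_fin _))
    refine ⟨fun s => b s.1 s.2, fun s τ => hb s.1 s.2 _ fun _ => rfl, ?_⟩
    simp only [Fintype.sum_sigma, hg, mul_sum]
    refine sum_congr rfl fun i _ => ?_
    simp only [fun j => hbh i ⟨i, j⟩ rfl, sum_mul, mul_assoc]
    exact sum_comm
  · rintro ⟨c, -, rfl⟩
    refine sum_mem fun ⟨i, k⟩ _ => Ideal.mul_mem_left _ _ ?_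
    rw [hg]
    exact sum_mem fun j _ => Ideal.mul_mem_left _ _ (Ideal.subset_span ⟨_, rfl⟩)

/-- Corollary 6.2: with variables `x_{i,j}` partitioned into `r` blocks of
sizes `nb i` (indexed by the sigma type `Σ i, Fin (nb i)`), the Young subgroup
`G = S_{n₁} × ⋯ × S_{n_r}` acting block-wise, and `f` a homogeneous regular
sequence with `fᵢ^σ = f_{σ(i)}` for `σ ∈ G`, define
`g_{i,k} = ∑ⱼ x_{i,j}^k · f_{i,j}` (the block-diagonal Vandermonde transform).
Then `(g) = (f) ∩ R^G` as ideals of the invariant ring `R^G`: an invariant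
polynomial lies in `(f₁,…,fₙ)` iff it is a combination of the `g`'s with
`G`-invariant coefficients. -/
theorem block_vandermonde_generators_of_invariant_ideal
    (K : Type*) [Field K] [CharZero K] (r : ℕ) (nb : Fin r → ℕ)
    (f : (Σ i : Fin r, Fin (nb i)) → MvPolynomial (Σ i : Fin r, Fin (nb i)) K)
    (hhom : ∀ idx, ∃ d, (f idx).IsHomogeneous d)
    (hreg : RingTheory.Sequence.IsRegular (MvPolynomial (Σ i : Fin r, Fin (nb i)) K)
      (Finset.univ.toList.map f))
    (hequiv : ∀ (τ : ∀ i, Equiv.Perm (Fin (nb i))) (idx : Σ i : Fin r, Fin (nb i)),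
      rename (Equiv.sigmaCongrRight τ) (f idx) = f (Equiv.sigmaCongrRight τ idx))
    (g : (Σ i : Fin r, Fin (nb i)) → MvPolynomial (Σ i : Fin r, Fin (nb i)) K)
    (hg : ∀ i : Fin r, ∀ k : Fin (nb i), g ⟨i, k⟩
      = ∑ j : Fin (nb i), (X (⟨i, j⟩ : Σ i : Fin r, Fin (nb i)) :
          MvPolynomial (Σ i : Fin r, Fin (nb i)) K) ^ (k : ℕ) * f ⟨i, j⟩) :
    ∀ p : MvPolynomial (Σ i : Fin r, Fin (nb i)) K,
      (∀ τ : ∀ i, Equiv.Perm (Fin (nb i)), rename (Equiv.sigmaCongrRight τ) p = p) →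
      (p ∈ Ideal.span (Set.range f) ↔
        ∃ c : (Σ i : Fin r, Fin (nb i)) → MvPolynomial (Σ i : Fin r, Fin (nb i)) K,
          (∀ idx, ∀ τ : ∀ i, Equiv.Perm (Fin (nb i)),
            rename (Equiv.sigmaCongrRight τ) (c idx) = c idx) ∧
          p = ∑ idx : Σ i : Fin r, Fin (nb i), c idx * g idx) :=
  block_vandermonde_generators_of_invariant_ideal_general K r nb f hequiv g hg
end
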